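/- arXiv:1407.1112 — 2 statements merged into one kernel-verified Lean document; each statement's English description precedes it below -/
import Mathlib

section
/- Let K_x, K_y ≥ 0 and γ̄_x, γ̄_y > 0, with associated quantities a_x, a_y, A_x, A_y, B̃_x, B̃_y. For γ > 0, the function G(γ) = A_x A_y Σ_{k=0}^∞ Σ_{n=0}^k B̃_x(n) B̃_y(k−n) Γ(n+1, a_x γ) Γ(k−n+1, a_y γ) is differentiable at γ with −G′(γ) = A_x A_y Σ_{k=0}^∞ Σ_{n=0}^k B̃_x(n) B̃_y(k−n) [ a_x^{n+1} γ^n e^{−a_x γ} Γ(k−n+1, a_y γ) + a_y^{k−n+1} γ^{k−n} e^{−a_y γ} Γ(n+1, a_x γ) ]. -/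
open MeasureTheory Set
open scoped ProbabilityTheory

/-- The parameter `a = (1+K)/γ̄` of the Rician power (non-central chi-square) distribution. -/
noncomputable def ra (K g : ℝ) : ℝ := (1 + K) / g

/-- The parameter `A = a·e^{-K}`. -/
noncomputable def rA (K g : ℝ) : ℝ := ra K g * Real.exp (-K)

/-- The series coefficients `B(k) = K^k a^k/(k!)²`. -/
noncomputable def rB (K g : ℝ) (k : ℕ) : ℝ := K ^ k * ra K g ^ k / ((k.factorial : ℝ)) ^ 2

/-- The normalized coefficients `B̃(k) = B(k)/a^{k+1}`. -/
noncomputable def rBt (K g : ℝ) (k : ℕ) : ℝ := rB K g k / ra K g ^ (k + 1)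

/-- The upper incomplete gamma function `Γ(s, x) = ∫_x^∞ t^{s-1} e^{-t} dt`. -/
noncomputable def uGamma (s x : ℝ) : ℝ := ∫ t in Set.Ioi x, t ^ (s - 1) * Real.exp (-t)

/-- The Rician power density `f(u) = A e^{-a u} Σ_k B(k) u^k` for `u > 0`, and `0` otherwise. -/
noncomputable def ricianDensity (K g u : ℝ) : ℝ :=
  if 0 < u then rA K g * Real.exp (-(ra K g) * u) * ∑' k : ℕ, rB K g k * u ^ k else 0



lemma integrableOn_poly_exp (n : ℕ) :
    IntegrableOn (fun t : ℝ => t ^ n * Real.exp (-t)) (Ioi 0) := by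
  have h := Real.GammaIntegral_convergent (s := (n : ℝ) + 1) (by positivity)
  refine h.congr_fun (fun x hx => ?_) measurableSet_Ioi
  beta_reduce
  rw [add_sub_cancel_right, Real.rpow_natCast, mul_comm]

lemma uGamma_nat (n : ℕ) (x : ℝ) :
    uGamma ((n : ℝ) + 1) x = ∫ t in Ioi x, t ^ n * Real.exp (-t) := by
  simp only [uGamma, add_sub_cancel_right, Real.rpow_natCast]

lemma uGamma_hasDerivAt (n : ℕ) {x : ℝ} (hx : 0 < x) :
    HasDerivAt (uGamma ((n : ℝ) + 1)) (-(x ^ n * Real.exp (-x))) x := by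
  set f : ℝ → ℝ := fun t => t ^ n * Real.exp (-t) with hf
  have hint : IntegrableOn f (Ioi 0) := integrableOn_poly_exp n
  have key : ∀ y : ℝ, 0 < y →
      uGamma ((n : ℝ) + 1) y = (∫ t in Ioi (0:ℝ), f t) - ∫ t in (0:ℝ)..y, f t := by
    intro y hy
    rw [uGamma_nat, intervalIntegral.integral_of_le hy.le, eq_sub_iff_add_eq, add_comm,
      ← setIntegral_union (Ioc_disjoint_Ioi le_rfl) measurableSet_Ioi
        (hint.mono_set Ioc_subset_Ioi_self) (hint.mono_set (Ioi_subset_Ioi hy.le)),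
      Ioc_union_Ioi_eq_Ioi hy.le]
  have hd : HasDerivAt (fun y => (∫ t in Ioi (0:ℝ), f t) - ∫ t in (0:ℝ)..y, f t)
      (-(x ^ n * Real.exp (-x))) x := by
    have hcont : Continuous f := (continuous_pow n).mul (Real.continuous_exp.comp continuous_neg)
    have hftc : HasDerivAt (fun y => ∫ t in (0:ℝ)..y, f t) (f x) x :=
      intervalIntegral.integral_hasDerivAt_right (hcont.intervalIntegrable 0 x)
        hcont.stronglyMeasurable.stronglyMeasurableAtFilter hcont.continuousAt
    have h := (hasDerivAt_const x (∫ t in Ioi (0:ℝ), f t)).sub hftc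
    simp only [zero_sub] at h
    exact h
  refine hd.congr_of_eventuallyEq ?_
  filter_upwards [eventually_gt_nhds hx] with y hy using key y hy

lemma uGamma_nonneg (n : ℕ) {x : ℝ} (hx : 0 ≤ x) : 0 ≤ uGamma ((n : ℝ) + 1) x := by
  rw [uGamma_nat]
  refine setIntegral_nonneg measurableSet_Ioi fun t ht => ?_
  have h0 : (0:ℝ) ≤ t := hx.trans (le_of_lt ht)
  positivity

lemma uGamma_le_factorial (n : ℕ) {x : ℝ} (hx : 0 ≤ x) :
    uGamma ((n : ℝ) + 1) x ≤ n.factorial := by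
  rw [uGamma_nat]
  have h1 : ∫ t in Ioi x, t ^ n * Real.exp (-t) ≤ ∫ t in Ioi (0:ℝ), t ^ n * Real.exp (-t) := by
    refine setIntegral_mono_set (integrableOn_poly_exp n) ?_
      (HasSubset.Subset.eventuallyLE (Ioi_subset_Ioi hx))
    refine (ae_restrict_iff' measurableSet_Ioi).2 (ae_of_all _ fun t ht => ?_)
    have h0 : (0:ℝ) ≤ t := le_of_lt ht
    positivity
  refine h1.trans (le_of_eq ?_)
  have h2 := Real.Gamma_eq_integral (s := (n : ℝ) + 1) (by positivity)
  have h3 : ∫ t in Ioi (0:ℝ), t ^ n * Real.exp (-t)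
      = ∫ x in Ioi (0:ℝ), Real.exp (-x) * x ^ ((n : ℝ) + 1 - 1) := by
    refine setIntegral_congr_fun measurableSet_Ioi fun t ht => ?_
    rw [add_sub_cancel_right, Real.rpow_natCast, mul_comm]
  rw [h3, ← h2]
  exact_mod_cast Real.Gamma_nat_eq_factorial n

lemma pow_mul_exp_le (n : ℕ) {a t : ℝ} (ha : 0 < a) (ht : 0 ≤ t) :
    t ^ n * Real.exp (-(a * t)) ≤ n.factorial * (2 / a) ^ n := by
  have h := Real.pow_div_factorial_le_exp (x := a * t / 2) (by positivity) n
  have hfac : (0:ℝ) < n.factorial := by positivity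
  have hkey : (a * t / 2) ^ n ≤ n.factorial * Real.exp (a * t / 2) := by
    rw [div_le_iff₀ hfac] at h
    linarith [h]
  have hts : t ^ n = (2 / a) ^ n * (a * t / 2) ^ n := by
    rw [← mul_pow]; congr 1; field_simp
  calc t ^ n * Real.exp (-(a * t))
      = (2 / a) ^ n * ((a * t / 2) ^ n * Real.exp (-(a * t))) := by rw [hts]; ring
    _ ≤ (2 / a) ^ n * ((n.factorial * Real.exp (a * t / 2)) * Real.exp (-(a * t))) := by
        gcongr
    _ = n.factorial * (2 / a) ^ n * Real.exp (a * t / 2 + -(a * t)) := by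
        rw [Real.exp_add]; ring
    _ ≤ n.factorial * (2 / a) ^ n * 1 := by
        gcongr
        exact Real.exp_le_one_iff.2 (by linarith [mul_nonneg ha.le ht])

    _ = n.factorial * (2 / a) ^ n := by ring

lemma summable_conv {p q : ℕ → ℝ} (hp : Summable p) (hq : Summable q) :
    Summable (fun k => ∑ n ∈ Finset.range (k + 1), p n * q (k - n)) := by
  have hp' : Summable fun n => ‖p n‖ := by simpa [Real.norm_eq_abs] using hp.abs
  have hq' : Summable fun n => ‖q n‖ := by simpa [Real.norm_eq_abs] using hq.abs
  exact (summable_norm_sum_mul_range_of_summable_norm hp' hq').of_norm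


lemma rBt_eq {K g : ℝ} (ha : ra K g ≠ 0) (n : ℕ) :
    rBt K g n = K ^ n / (((n.factorial : ℝ)) ^ 2 * ra K g) := by
  have hf : ((n.factorial : ℝ)) ≠ 0 := Nat.cast_ne_zero.2 n.factorial_ne_zero
  have h1 : ra K g ^ n * ra K g ≠ 0 := mul_ne_zero (pow_ne_zero _ ha) ha
  unfold rBt rB
  rw [pow_succ (ra K g) n, div_div, div_eq_div_iff (mul_ne_zero (pow_ne_zero 2 hf) h1)
    (mul_ne_zero (pow_ne_zero 2 hf) ha)]
  ring

lemma uGamma_comp_hasDerivAt (n : ℕ) {a t : ℝ} (ha : 0 < a) (ht : 0 < t) :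
    HasDerivAt (fun s => uGamma ((n : ℝ) + 1) (a * s))
      (-((a * t) ^ n * Real.exp (-(a * t))) * a) t := by
  have hlin : HasDerivAt (fun s : ℝ => a * s) a t := by
    simpa using (hasDerivAt_id t).const_mul a
  exact (uGamma_hasDerivAt n (mul_pos ha ht)).comp t hlin

lemma key_bound {K1 K2 a1 a2 t : ℝ} (hK1 : 0 ≤ K1) (hK2 : 0 ≤ K2) (ha1 : 0 < a1)
    (ha2 : 0 < a2) (ht : 0 < t) (n m : ℕ) :
    K1 ^ n / ((n.factorial : ℝ) ^ 2 * a1) * (K2 ^ m / ((m.factorial : ℝ) ^ 2 * a2)) *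
      (a1 ^ (n + 1) * t ^ n * Real.exp (-a1 * t) * uGamma ((m : ℝ) + 1) (a2 * t))
    ≤ (2 * K1) ^ n / n.factorial * (K2 ^ m / m.factorial / a2) := by
  have hfn : (0:ℝ) < n.factorial := by positivity
  have hfm : (0:ℝ) < m.factorial := by positivity
  have hc1 : 0 ≤ K1 ^ n / ((n.factorial : ℝ) ^ 2 * a1) :=
    div_nonneg (pow_nonneg hK1 n) (by positivity)
  have hc2 : 0 ≤ K2 ^ m / ((m.factorial : ℝ) ^ 2 * a2) :=
    div_nonneg (pow_nonneg hK2 m) (by positivity)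
  have hb1 : t ^ n * Real.exp (-(a1 * t)) ≤ n.factorial * (2 / a1) ^ n :=
    pow_mul_exp_le n ha1 ht.le
  have hb2 : uGamma ((m : ℝ) + 1) (a2 * t) ≤ m.factorial :=
    uGamma_le_factorial m (mul_pos ha2 ht).le
  have hb2' : 0 ≤ uGamma ((m : ℝ) + 1) (a2 * t) := uGamma_nonneg m (mul_pos ha2 ht).le
  have hpre : 0 ≤ K1 ^ n / ((n.factorial : ℝ) ^ 2 * a1) *
      (K2 ^ m / ((m.factorial : ℝ) ^ 2 * a2)) * a1 ^ (n + 1) :=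
    mul_nonneg (mul_nonneg hc1 hc2) (pow_nonneg ha1.le _)
  calc K1 ^ n / ((n.factorial : ℝ) ^ 2 * a1) * (K2 ^ m / ((m.factorial : ℝ) ^ 2 * a2)) *
      (a1 ^ (n + 1) * t ^ n * Real.exp (-a1 * t) * uGamma ((m : ℝ) + 1) (a2 * t))
      = (K1 ^ n / ((n.factorial : ℝ) ^ 2 * a1) * (K2 ^ m / ((m.factorial : ℝ) ^ 2 * a2)) *
          a1 ^ (n + 1)) *
        ((t ^ n * Real.exp (-(a1 * t))) * uGamma ((m : ℝ) + 1) (a2 * t)) := by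
        rw [neg_mul]; ring
    _ ≤ (K1 ^ n / ((n.factorial : ℝ) ^ 2 * a1) * (K2 ^ m / ((m.factorial : ℝ) ^ 2 * a2)) *
          a1 ^ (n + 1)) *
        ((n.factorial * (2 / a1) ^ n) * m.factorial) := by
        refine mul_le_mul_of_nonneg_left ?_ hpre
        exact mul_le_mul hb1 hb2 hb2' (by positivity)
    _ = (2 * K1) ^ n / n.factorial * (K2 ^ m / m.factorial / a2) := by
        field_simp
        have h1n : a1 ^ n * a1⁻¹ ^ n = 1 := by rw [← mul_pow, mul_inv_cancel₀ ha1.ne', one_pow]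
        linear_combination (K1 ^ n * K2 ^ m * a1 * 2 ^ n) * h1n

/- main -/
set_option maxHeartbeats 2000000 in
/-- differentiability of the complementary CDF series `G(γ)` for `γ > 0`,
with `-G'(γ)` given by the stated double series. -/
theorem stmt_5 (Kx gx Ky gy : ℝ) (hKx : 0 ≤ Kx) (hgx : 0 < gx) (hKy : 0 ≤ Ky) (hgy : 0 < gy)
    (γ : ℝ) (hγ : 0 < γ) :
    HasDerivAt (fun t : ℝ => rA Kx gx * rA Ky gy * ∑' k : ℕ, ∑ n ∈ Finset.range (k + 1),
        rBt Kx gx n * rBt Ky gy (k - n) * uGamma (n + 1) (ra Kx gx * t) *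
          uGamma ((k - n : ℕ) + 1) (ra Ky gy * t))
      (-(rA Kx gx * rA Ky gy * ∑' k : ℕ, ∑ n ∈ Finset.range (k + 1),
        rBt Kx gx n * rBt Ky gy (k - n) *
          (ra Kx gx ^ (n + 1) * γ ^ n * Real.exp (-(ra Kx gx) * γ) *
              uGamma ((k - n : ℕ) + 1) (ra Ky gy * γ) +
            ra Ky gy ^ (k - n + 1) * γ ^ (k - n) * Real.exp (-(ra Ky gy) * γ) *
              uGamma (n + 1) (ra Kx gx * γ)))) γ := by
  have hax : 0 < ra Kx gx := div_pos (by linarith) hgx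
  have hay : 0 < ra Ky gy := div_pos (by linarith) hgy
  have hcx : ∀ n : ℕ, rBt Kx gx n = Kx ^ n / ((n.factorial : ℝ) ^ 2 * ra Kx gx) :=
    rBt_eq hax.ne'
  have hcy : ∀ n : ℕ, rBt Ky gy n = Ky ^ n / ((n.factorial : ℝ) ^ 2 * ra Ky gy) :=
    rBt_eq hay.ne'
  have hcxn : ∀ n, 0 ≤ rBt Kx gx n := fun n => by
    rw [hcx n]; exact div_nonneg (pow_nonneg hKx n) (by positivity)
  have hcyn : ∀ n, 0 ≤ rBt Ky gy n := fun n => by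
    rw [hcy n]; exact div_nonneg (pow_nonneg hKy n) (by positivity)
  -- the summands and their derivatives
  set F : ℕ → ℝ → ℝ := fun k t => ∑ n ∈ Finset.range (k + 1),
      rBt Kx gx n * rBt Ky gy (k - n) * uGamma (n + 1) (ra Kx gx * t) *
        uGamma ((k - n : ℕ) + 1) (ra Ky gy * t) with hF_def
  set F' : ℕ → ℝ → ℝ := fun k t => -(∑ n ∈ Finset.range (k + 1),
      rBt Kx gx n * rBt Ky gy (k - n) *
        (ra Kx gx ^ (n + 1) * t ^ n * Real.exp (-(ra Kx gx) * t) *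
            uGamma ((k - n : ℕ) + 1) (ra Ky gy * t) +
          ra Ky gy ^ (k - n + 1) * t ^ (k - n) * Real.exp (-(ra Ky gy) * t) *
            uGamma (n + 1) (ra Kx gx * t))) with hF'_def
  -- summable bound for derivatives on Ioi 0
  set u : ℕ → ℝ := fun k => ∑ n ∈ Finset.range (k + 1),
      ((2 * Kx) ^ n / n.factorial * (Ky ^ (k - n) / (k - n).factorial / ra Ky gy) +
        Kx ^ n / n.factorial / ra Kx gx * ((2 * Ky) ^ (k - n) / (k - n).factorial)) with hu_def
  have hu : Summable u := by
    have h1 : Summable (fun k => ∑ n ∈ Finset.range (k + 1),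
        (2 * Kx) ^ n / (n.factorial : ℝ) *
          (Ky ^ (k - n) / ((k - n).factorial : ℝ) / ra Ky gy)) :=
      summable_conv (p := fun n => (2 * Kx) ^ n / (n.factorial : ℝ))
        (q := fun m => Ky ^ m / (m.factorial : ℝ) / ra Ky gy)
        (Real.summable_pow_div_factorial (2 * Kx))
        ((Real.summable_pow_div_factorial Ky).div_const _)
    have h2 : Summable (fun k => ∑ n ∈ Finset.range (k + 1),
        Kx ^ n / (n.factorial : ℝ) / ra Kx gx *
          ((2 * Ky) ^ (k - n) / ((k - n).factorial : ℝ))) :=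
      summable_conv (p := fun n => Kx ^ n / (n.factorial : ℝ) / ra Kx gx)
        (q := fun m => (2 * Ky) ^ m / (m.factorial : ℝ))
        ((Real.summable_pow_div_factorial Kx).div_const _)
        (Real.summable_pow_div_factorial (2 * Ky))
    refine (h1.add h2).congr fun k => ?_
    rw [hu_def, ← Finset.sum_add_distrib]
  -- each term has the claimed derivative on Ioi 0
  have hder : ∀ k : ℕ, ∀ t ∈ Ioi (0:ℝ), HasDerivAt (F k) (F' k t) t := by
    intro k t ht
    have ht' : 0 < t := ht
    have hsum : HasDerivAt (F k) (∑ n ∈ Finset.range (k + 1),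
        (rBt Kx gx n * rBt Ky gy (k - n) *
            (-((ra Kx gx * t) ^ n * Real.exp (-(ra Kx gx * t))) * ra Kx gx) *
          uGamma (((k - n : ℕ) : ℝ) + 1) (ra Ky gy * t) +
        rBt Kx gx n * rBt Ky gy (k - n) * uGamma ((n : ℝ) + 1) (ra Kx gx * t) *
          (-((ra Ky gy * t) ^ (k - n) * Real.exp (-(ra Ky gy * t))) * ra Ky gy))) t := by
      simp only [hF_def]
      refine HasDerivAt.fun_sum fun n _ => ?_
      exact ((uGamma_comp_hasDerivAt n hax ht').const_mul
        (rBt Kx gx n * rBt Ky gy (k - n))).mul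
        (uGamma_comp_hasDerivAt (k - n) hay ht')
    convert hsum using 1
    simp only [hF'_def]
    rw [← Finset.sum_neg_distrib]
    refine Finset.sum_congr rfl fun n _ => ?_
    simp only [neg_mul, neg_neg]
    ring
  -- the bound on the derivatives
  have hbound : ∀ k : ℕ, ∀ t ∈ Ioi (0:ℝ), ‖F' k t‖ ≤ u k := by
    intro k t ht
    have ht' : 0 < t := ht
    simp only [hF'_def, hu_def, Real.norm_eq_abs, abs_neg]
    refine (Finset.abs_sum_le_sum_abs _ _).trans (Finset.sum_le_sum fun n _ => ?_)
    have hg1 : 0 ≤ uGamma ((n : ℝ) + 1) (ra Kx gx * t) :=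
      uGamma_nonneg n (mul_pos hax ht').le
    have hg2 : 0 ≤ uGamma (((k - n : ℕ) : ℝ) + 1) (ra Ky gy * t) :=
      uGamma_nonneg (k - n) (mul_pos hay ht').le
    have hT1 : 0 ≤ ra Kx gx ^ (n + 1) * t ^ n * Real.exp (-(ra Kx gx) * t) *
        uGamma (((k - n : ℕ) : ℝ) + 1) (ra Ky gy * t) := by
      have h1 : (0:ℝ) ≤ ra Kx gx ^ (n + 1) := pow_nonneg hax.le _
      have h2 : (0:ℝ) ≤ t ^ n := pow_nonneg ht'.le _
      have h3 := Real.exp_nonneg (-(ra Kx gx) * t)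
      exact mul_nonneg (mul_nonneg (mul_nonneg h1 h2) h3) hg2
    have hT2 : 0 ≤ ra Ky gy ^ (k - n + 1) * t ^ (k - n) * Real.exp (-(ra Ky gy) * t) *
        uGamma ((n : ℝ) + 1) (ra Kx gx * t) := by
      have h1 : (0:ℝ) ≤ ra Ky gy ^ (k - n + 1) := pow_nonneg hay.le _
      have h2 : (0:ℝ) ≤ t ^ (k - n) := pow_nonneg ht'.le _
      have h3 := Real.exp_nonneg (-(ra Ky gy) * t)
      exact mul_nonneg (mul_nonneg (mul_nonneg h1 h2) h3) hg1
    rw [abs_of_nonneg (mul_nonneg (mul_nonneg (hcxn n) (hcyn (k - n)))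
      (add_nonneg hT1 hT2)), mul_add]
    refine add_le_add ?_ ?_
    · rw [hcx n, hcy (k - n)]
      exact key_bound hKx hKy hax hay ht' n (k - n)
    · have h2b : rBt Ky gy (k - n) * rBt Kx gx n *
          (ra Ky gy ^ (k - n + 1) * t ^ (k - n) * Real.exp (-(ra Ky gy) * t) *
            uGamma ((n : ℝ) + 1) (ra Kx gx * t))
          ≤ (2 * Ky) ^ (k - n) / ((k - n).factorial : ℝ) *
            (Kx ^ n / (n.factorial : ℝ) / ra Kx gx) := by
        rw [hcy (k - n), hcx n]
        exact key_bound hKy hKx hay hax ht' (k - n) n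
      calc rBt Kx gx n * rBt Ky gy (k - n) *
          (ra Ky gy ^ (k - n + 1) * t ^ (k - n) * Real.exp (-(ra Ky gy) * t) *
            uGamma ((n : ℝ) + 1) (ra Kx gx * t))
          = rBt Ky gy (k - n) * rBt Kx gx n *
            (ra Ky gy ^ (k - n + 1) * t ^ (k - n) * Real.exp (-(ra Ky gy) * t) *
              uGamma ((n : ℝ) + 1) (ra Kx gx * t)) := by ring
        _ ≤ (2 * Ky) ^ (k - n) / ((k - n).factorial : ℝ) *
            (Kx ^ n / (n.factorial : ℝ) / ra Kx gx) := h2b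
        _ = Kx ^ n / (n.factorial : ℝ) / ra Kx gx *
            ((2 * Ky) ^ (k - n) / ((k - n).factorial : ℝ)) := by ring
  -- summability of the series at γ
  have hF0 : Summable (fun k => F k γ) := by
    have hconv : Summable (fun k => ∑ n ∈ Finset.range (k + 1),
        Kx ^ n / (n.factorial : ℝ) / ra Kx gx *
          (Ky ^ (k - n) / ((k - n).factorial : ℝ) / ra Ky gy)) :=
      summable_conv (p := fun n => Kx ^ n / (n.factorial : ℝ) / ra Kx gx)
        (q := fun m => Ky ^ m / (m.factorial : ℝ) / ra Ky gy)
        ((Real.summable_pow_div_factorial Kx).div_const _)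
        ((Real.summable_pow_div_factorial Ky).div_const _)
    refine Summable.of_nonneg_of_le (fun k => ?_) (fun k => ?_) hconv
    · simp only [hF_def]
      refine Finset.sum_nonneg fun n _ => ?_
      exact mul_nonneg (mul_nonneg (mul_nonneg (hcxn n) (hcyn _))
        (uGamma_nonneg n (mul_pos hax hγ).le)) (uGamma_nonneg _ (mul_pos hay hγ).le)
    · simp only [hF_def]
      refine Finset.sum_le_sum fun n _ => ?_
      have h1 : uGamma ((n : ℝ) + 1) (ra Kx gx * γ) ≤ n.factorial :=
        uGamma_le_factorial n (mul_pos hax hγ).le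
      have h2 : uGamma (((k - n : ℕ) : ℝ) + 1) (ra Ky gy * γ) ≤ (k - n).factorial :=
        uGamma_le_factorial (k - n) (mul_pos hay hγ).le
      have hg1 : 0 ≤ uGamma ((n : ℝ) + 1) (ra Kx gx * γ) :=
        uGamma_nonneg n (mul_pos hax hγ).le
      have hg2 : 0 ≤ uGamma (((k - n : ℕ) : ℝ) + 1) (ra Ky gy * γ) :=
        uGamma_nonneg (k - n) (mul_pos hay hγ).le
      have hcd : 0 ≤ rBt Kx gx n * rBt Ky gy (k - n) := mul_nonneg (hcxn n) (hcyn _)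
      calc rBt Kx gx n * rBt Ky gy (k - n) * uGamma ((n : ℝ) + 1) (ra Kx gx * γ) *
            uGamma (((k - n : ℕ) : ℝ) + 1) (ra Ky gy * γ)
          ≤ rBt Kx gx n * rBt Ky gy (k - n) * (n.factorial : ℝ) *
            ((k - n).factorial : ℝ) := by
            refine mul_le_mul (mul_le_mul_of_nonneg_left h1 hcd) h2 hg2 ?_
            exact mul_nonneg hcd (Nat.cast_nonneg _)
        _ = Kx ^ n / (n.factorial : ℝ) / ra Kx gx *
            (Ky ^ (k - n) / ((k - n).factorial : ℝ) / ra Ky gy) := by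
            have hfn : ((n.factorial : ℝ)) ≠ 0 := Nat.cast_ne_zero.2 n.factorial_ne_zero
            have hfm : (((k - n).factorial : ℝ)) ≠ 0 :=
              Nat.cast_ne_zero.2 (k - n).factorial_ne_zero
            rw [hcx n, hcy (k - n)]
            field_simp
  -- main differentiation theorem for the series
  have Hmain : HasDerivAt (fun t => ∑' k, F k t) (∑' k, F' k γ) γ :=
    hasDerivAt_tsum_of_isPreconnected hu isOpen_Ioi (convex_Ioi (0:ℝ)).isPreconnected
      hder hbound (mem_Ioi.2 hγ) hF0 (mem_Ioi.2 hγ)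
  have Hfinal : HasDerivAt (fun t => rA Kx gx * rA Ky gy * ∑' k, F k t)
      (rA Kx gx * rA Ky gy * ∑' k, F' k γ) γ := Hmain.const_mul _
  have heq1 : (fun t : ℝ => rA Kx gx * rA Ky gy * ∑' k, F k t)
      = (fun t : ℝ => rA Kx gx * rA Ky gy * ∑' k : ℕ, ∑ n ∈ Finset.range (k + 1),
        rBt Kx gx n * rBt Ky gy (k - n) * uGamma (n + 1) (ra Kx gx * t) *
          uGamma ((k - n : ℕ) + 1) (ra Ky gy * t)) := by
    simp only [hF_def]
  have heq2 : rA Kx gx * rA Ky gy * ∑' k, F' k γ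
      = -(rA Kx gx * rA Ky gy * ∑' k : ℕ, ∑ n ∈ Finset.range (k + 1),
        rBt Kx gx n * rBt Ky gy (k - n) *
          (ra Kx gx ^ (n + 1) * γ ^ n * Real.exp (-(ra Kx gx) * γ) *
              uGamma ((k - n : ℕ) + 1) (ra Ky gy * γ) +
            ra Ky gy ^ (k - n + 1) * γ ^ (k - n) * Real.exp (-(ra Ky gy) * γ) *
              uGamma (n + 1) (ra Kx gx * γ))) := by
    simp only [hF'_def]
    rw [tsum_neg]
    ring
  rw [heq1, heq2] at Hfinal
  exact Hfinal
end

section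
/- Let X and Y be independent real random variables such that X has the Rician power density with parameters (K_x, γ̄_x) and Y has the Rician power density with parameters (K_y, γ̄_y), and let f_Z be the density of Z = min(X, Y). Then for every γ₀ > 0, ∫_{γ₀}^∞ ln(γ/γ₀) f_Z(γ) dγ = A_x A_y Σ_{k=0}^∞ Σ_{n=0}^k B̃_x(n) B̃_y(k−n) [ a_x^{n+1} (k−n)! Σ_{m₁=0}^{k−n} (a_y^{m₁}/m₁!) ∫_{γ₀}^∞ γ^{n+m₁} e^{−(a_x+a_y)γ} ln(γ/γ₀) dγ + a_y^{k−n+1} n! Σ_{m₂=0}^{n} (a_x^{m₂}/m₂!) ∫_{γ₀}^∞ γ^{k−n+m₂} e^{−(a_x+a_y)γ} ln(γ/γ₀) dγ ], where the integral on the left and the series on the right converge. -/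
open MeasureTheory Set
open scoped ProbabilityTheory

open Filter
open scoped Topology

/-! ### exponential tail integrals -/

lemma expSum_hasDerivAt (c : ℝ) (p : ℕ) (x : ℝ) :
    HasDerivAt (fun t : ℝ => Real.exp (-c*t) * ∑ m ∈ Finset.range (p+1), c^m * t^m / (m.factorial : ℝ))
      (-(Real.exp (-c*x) * (c^(p+1) * x^p / (p.factorial : ℝ)))) x := by
  have hexp : HasDerivAt (fun t : ℝ => Real.exp (-c*t)) (Real.exp (-c*x) * (-c * 1)) x :=
    ((hasDerivAt_id x).const_mul (-c)).exp
  have h1 : ∀ m : ℕ, HasDerivAt (fun t : ℝ => c^m * t^m / (m.factorial : ℝ))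
      (c^m * (m * x^(m-1)) / (m.factorial : ℝ)) x := fun m =>
    ((hasDerivAt_pow m x).const_mul (c^m)).div_const _
  have hS : HasDerivAt (fun t : ℝ => ∑ m ∈ Finset.range (p+1), c^m * t^m / (m.factorial : ℝ))
      (∑ m ∈ Finset.range (p+1), c^m * (m * x^(m-1)) / (m.factorial : ℝ)) x :=
    HasDerivAt.fun_sum (fun m _ => h1 m)
  have hsum : ∑ m ∈ Finset.range (p+1), c^m * (m * x^(m-1)) / (m.factorial : ℝ)
      = c * ∑ m ∈ Finset.range p, c^m * x^m / (m.factorial : ℝ) := by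
    rw [Finset.sum_range_succ']
    simp only [Nat.factorial_succ, pow_succ, Nat.cast_mul, Nat.cast_succ, Nat.add_sub_cancel]
    rw [Finset.mul_sum]
    simp only [Nat.cast_zero, mul_zero, zero_mul, pow_zero, Nat.factorial_zero, Nat.cast_one,
      zero_div, add_zero, CharP.cast_eq_zero]
    refine Finset.sum_congr rfl fun m _ => ?_
    have : ((m:ℝ) + 1) ≠ 0 := by positivity
    field_simp
  have := hexp.fun_mul hS
  refine this.congr_deriv ?_
  rw [hsum, Finset.sum_range_succ (fun m => c^m * x^m / (m.factorial : ℝ)) p]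
  ring

lemma sum_zero_pow_div_factorial (p : ℕ) :
    ∑ m ∈ Finset.range (p+1), (0:ℝ)^m / (m.factorial : ℝ) = 1 := by
  rw [Finset.sum_range_succ']
  simp

lemma exp_tail (c : ℝ) (hc : 0 < c) (p : ℕ) {t : ℝ} (ht : 0 ≤ t) :
    IntegrableOn (fun u : ℝ => u^p * Real.exp (-c*u)) (Ioi t) ∧
    ∫ u in Ioi t, u^p * Real.exp (-c*u)
      = ((p.factorial : ℝ) / c^(p+1)) *
          (Real.exp (-c*t) * ∑ m ∈ Finset.range (p+1), c^m * t^m / (m.factorial : ℝ)) := by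
  set G : ℝ → ℝ := fun s =>
    -(((p.factorial : ℝ) / c^(p+1)) *
      (Real.exp (-c*s) * ∑ m ∈ Finset.range (p+1), c^m * s^m / (m.factorial : ℝ))) with hGdef
  have hG : ∀ x : ℝ, HasDerivAt G (x^p * Real.exp (-c*x)) x := by
    intro x
    have := ((expSum_hasDerivAt c p x).const_mul ((p.factorial : ℝ) / c^(p+1))).neg
    refine this.congr_deriv ?_
    have hp : (p.factorial : ℝ) ≠ 0 := by positivity
    have hc' : c ≠ 0 := ne_of_gt hc
    field_simp
  have htend : Tendsto G atTop (𝓝 0) := by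
    have hterm : ∀ m : ℕ, Tendsto (fun s : ℝ => s^m * Real.exp (-c*s)) atTop (𝓝 0) := by
      intro m
      have h1 : Tendsto (fun s : ℝ => c * s) atTop atTop :=
        Tendsto.const_mul_atTop hc tendsto_id
      have h2 := (Real.tendsto_pow_mul_exp_neg_atTop_nhds_zero m).comp h1
      have h3 : Tendsto (fun s : ℝ => (1/c^m) * ((c*s)^m * Real.exp (-(c*s)))) atTop (𝓝 ((1/c^m) * 0)) :=
        h2.const_mul _
      rw [mul_zero] at h3
      refine h3.congr fun s => ?_
      have : c ≠ 0 := ne_of_gt hc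
      rw [mul_pow, neg_mul]
      field_simp
    have : Tendsto (fun s : ℝ =>
        -(((p.factorial : ℝ) / c^(p+1)) *
          ∑ m ∈ Finset.range (p+1), (c^m / (m.factorial : ℝ)) * (s^m * Real.exp (-c*s))))
        atTop (𝓝 (-(((p.factorial : ℝ) / c^(p+1)) * ∑ m ∈ Finset.range (p+1), (c^m / (m.factorial : ℝ)) * 0))) := by
      refine Tendsto.neg (Tendsto.const_mul _ ?_)
      exact tendsto_finset_sum _ fun m _ => (hterm m).const_mul _
    simp only [mul_zero, Finset.sum_const_zero, neg_zero] at this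
    refine this.congr fun s => ?_
    rw [hGdef]
    simp only [neg_inj]
    congr 1
    rw [Finset.mul_sum]
    refine Finset.sum_congr rfl fun m _ => ?_
    ring
  have hnn : ∀ x ∈ Ioi t, 0 ≤ x^p * Real.exp (-c*x) := by
    intro x hx
    have : (0:ℝ) < x := lt_of_le_of_lt ht hx
    positivity
  have hcont : ContinuousWithinAt G (Ici t) t := (hG t).continuousAt.continuousWithinAt
  refine ⟨integrableOn_Ioi_deriv_of_nonneg hcont (fun x _ => hG x) hnn htend, ?_⟩
  rw [integral_Ioi_of_hasDerivAt_of_nonneg hcont (fun x _ => hG x) hnn htend]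
  simp [hGdef]

lemma exp_tail_le (c : ℝ) (hc : 0 < c) (p : ℕ) {t : ℝ} (ht : 0 ≤ t) :
    ∫ u in Ioi t, u^p * Real.exp (-c*u) ≤ (p.factorial : ℝ) / c^(p+1) := by
  have h0 := exp_tail c hc p (le_refl 0)
  have hmono : ∫ u in Ioi t, u^p * Real.exp (-c*u) ≤ ∫ u in Ioi (0:ℝ), u^p * Real.exp (-c*u) := by
    refine setIntegral_mono_set h0.1 ?_ ?_
    · filter_upwards [ae_restrict_mem measurableSet_Ioi] with x hx
      have : (0:ℝ) < x := hx
      positivity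
    · exact HasSubset.Subset.eventuallyLE (Ioi_subset_Ioi ht)
  refine hmono.trans ?_
  rw [h0.2]
  have : ∑ m ∈ Finset.range (p+1), c^m * (0:ℝ)^m / (m.factorial : ℝ) = 1 := by
    rw [← sum_zero_pow_div_factorial p]
    refine Finset.sum_congr rfl fun m _ => ?_
    rcases Nat.eq_zero_or_pos m with h | h
    · simp [h]
    · rw [zero_pow h.ne']
      ring
  rw [this]
  simp

/-! ### coefficients -/

lemma ra_pos {K g : ℝ} (hK : 0 ≤ K) (hg : 0 < g) : 0 < ra K g := div_pos (by linarith) hg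

lemma rA_pos {K g : ℝ} (hK : 0 ≤ K) (hg : 0 < g) : 0 < rA K g :=
  mul_pos (ra_pos hK hg) (Real.exp_pos _)

lemma factorial_cast_pos (k : ℕ) : (0:ℝ) < (k.factorial : ℝ) := by
  exact_mod_cast k.factorial_pos

lemma rB_nonneg {K g : ℝ} (hK : 0 ≤ K) (hg : 0 < g) (k : ℕ) : 0 ≤ rB K g k :=
  div_nonneg (mul_nonneg (pow_nonneg hK _) (pow_nonneg (ra_pos hK hg).le _)) (by positivity)

lemma rB_zero (K g : ℝ) : rB K g 0 = 1 := by simp [rB]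

lemma rB_le {K g : ℝ} (hK : 0 ≤ K) (hg : 0 < g) (k : ℕ) :
    rB K g k ≤ (K * ra K g)^k / (k.factorial : ℝ) := by
  rw [rB, mul_pow]
  have hf := factorial_cast_pos k
  have h1 : (1:ℝ) ≤ (k.factorial : ℝ) := by exact_mod_cast k.factorial_pos
  have h2 : (k.factorial : ℝ) ≤ ((k.factorial : ℝ))^2 := by nlinarith
  exact div_le_div_of_nonneg_left
    (mul_nonneg (pow_nonneg hK k) (pow_nonneg (ra_pos hK hg).le k)) hf h2

lemma rBt_nonneg {K g : ℝ} (hK : 0 ≤ K) (hg : 0 < g) (k : ℕ) : 0 ≤ rBt K g k :=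
  div_nonneg (rB_nonneg hK hg k) (pow_nonneg (ra_pos hK hg).le _)

lemma rB_eq_rBt {K g : ℝ} (hK : 0 ≤ K) (hg : 0 < g) (k : ℕ) :
    rB K g k = rBt K g k * ra K g ^ (k+1) := by
  rw [rBt, div_mul_cancel₀]
  exact pow_ne_zero _ (ra_pos hK hg).ne'

lemma summable_rB_pow {K g : ℝ} (hK : 0 ≤ K) (hg : 0 < g) (u : ℝ) :
    Summable (fun k => rB K g k * u^k) := by
  refine Summable.of_abs ?_
  refine Summable.of_nonneg_of_le (fun k => abs_nonneg _)
    (fun k => ?_) (Real.summable_pow_div_factorial (K * ra K g * |u|))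
  rw [abs_mul, abs_of_nonneg (rB_nonneg hK hg k), abs_pow]
  calc rB K g k * |u|^k ≤ (K * ra K g)^k / (k.factorial : ℝ) * |u|^k :=
        mul_le_mul_of_nonneg_right (rB_le hK hg k) (by positivity)
    _ = (K * ra K g * |u|)^k / (k.factorial : ℝ) := by rw [mul_pow]; ring

lemma continuous_rB_tsum {K g : ℝ} (hK : 0 ≤ K) (hg : 0 < g) :
    Continuous (fun u : ℝ => ∑' k, rB K g k * u^k) := by
  rw [continuous_iff_continuousAt]
  intro u
  have hRpos : (0:ℝ) < |u| + 1 := by positivity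
  have hsum : Summable (fun k => (K * ra K g * (|u|+1))^k / (k.factorial : ℝ)) :=
    Real.summable_pow_div_factorial _
  have hb : ∀ (k : ℕ), ∀ x ∈ Metric.ball (0:ℝ) (|u|+1),
      ‖rB K g k * x^k‖ ≤ (K * ra K g * (|u|+1))^k / (k.factorial : ℝ) := by
    intro k x hx
    rw [Metric.mem_ball, dist_zero_right, Real.norm_eq_abs] at hx
    rw [Real.norm_eq_abs, abs_mul, abs_of_nonneg (rB_nonneg hK hg k), abs_pow]
    have h3 : 0 ≤ K * ra K g := mul_nonneg hK (ra_pos hK hg).le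
    have h1 : rB K g k * |x|^k ≤ (K * ra K g)^k / (k.factorial : ℝ) * (|u|+1)^k :=
      mul_le_mul (rB_le hK hg k) (pow_le_pow_left₀ (abs_nonneg _) hx.le k) (by positivity)
        (by positivity)
    refine h1.trans_eq ?_
    rw [mul_pow (K * ra K g) (|u|+1) k, div_mul_eq_mul_div]
  have := (tendstoUniformlyOn_tsum hsum hb).continuousOn
    (Eventually.of_forall fun t => continuousOn_finset_sum t fun k _ =>
      (continuous_const.mul (continuous_pow k)).continuousOn).frequently
  refine this.continuousAt (Metric.isOpen_ball.mem_nhds ?_)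
  rw [Metric.mem_ball, dist_zero_right, Real.norm_eq_abs]
  linarith

lemma rician_measurable {K g : ℝ} (hK : 0 ≤ K) (hg : 0 < g) :
    Measurable (ricianDensity K g) := by
  refine Measurable.ite measurableSet_Ioi ?_ measurable_const
  exact (measurable_const.mul (Real.measurable_exp.comp (measurable_id.const_mul _))).mul
    (continuous_rB_tsum hK hg).measurable

lemma rician_nonneg {K g : ℝ} (hK : 0 ≤ K) (hg : 0 < g) (u : ℝ) :
    0 ≤ ricianDensity K g u := by
  rw [ricianDensity]
  split_ifs with hu
  · refine mul_nonneg (mul_nonneg (rA_pos hK hg).le (Real.exp_pos _).le) (tsum_nonneg fun k => ?_)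
    exact mul_nonneg (rB_nonneg hK hg k) (pow_nonneg hu.le k)
  · exact le_refl 0

lemma rician_tsum_ge_one {K g : ℝ} (hK : 0 ≤ K) (hg : 0 < g) {u : ℝ} (hu : 0 ≤ u) :
    1 ≤ ∑' k, rB K g k * u^k := by
  have h0 : rB K g 0 * u^0 = 1 := by simp [rB_zero]
  calc (1:ℝ) = rB K g 0 * u^0 := h0.symm
    _ ≤ ∑' k, rB K g k * u^k :=
      Summable.le_tsum (summable_rB_pow hK hg u) 0 fun k _ => mul_nonneg (rB_nonneg hK hg k) (pow_nonneg hu k)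

lemma rician_pos {K g : ℝ} (hK : 0 ≤ K) (hg : 0 < g) {u : ℝ} (hu : 0 < u) :
    0 < ricianDensity K g u := by
  rw [ricianDensity, if_pos hu]
  have h0 := rician_tsum_ge_one hK hg (u := u) hu.le
  have h1 : (0:ℝ) < rA K g * Real.exp (-(ra K g) * u) :=
    mul_pos (rA_pos hK hg) (Real.exp_pos _)
  nlinarith

lemma rician_continuousAt {K g : ℝ} (hK : 0 ≤ K) (hg : 0 < g) {u : ℝ} (hu : 0 < u) :
    ContinuousAt (ricianDensity K g) u := by
  have hform : ContinuousAt (fun v : ℝ => rA K g * Real.exp (-(ra K g) * v) * ∑' k, rB K g k * v^k) u :=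
    ((continuous_const.mul (Real.continuous_exp.comp (continuous_const.mul continuous_id))).mul
      (continuous_rB_tsum hK hg)).continuousAt
  refine hform.congr ?_
  filter_upwards [isOpen_Ioi.mem_nhds hu] with v hv
  simp [ricianDensity, mem_Ioi.mp hv]

/-! ### generic sum/integral swap -/

lemma swap_helper {s : Set ℝ} (hs : MeasurableSet s) {F : ℕ → ℝ → ℝ} {G : ℝ → ℝ}
    (hG : Measurable G) (hFmeas : ∀ j, Measurable (F j))
    (hnn : ∀ j, ∀ x ∈ s, 0 ≤ F j x)
    (hint : ∀ j, IntegrableOn (F j) s)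
    (hptsum : ∀ x ∈ s, Summable (fun j => F j x))
    (heq : ∀ x ∈ s, G x = ∑' j, F j x)
    {c : ℕ → ℝ} (hc : Summable c) (hle : ∀ j, ∫ x in s, F j x ≤ c j) :
    IntegrableOn G s ∧ Summable (fun j => ∫ x in s, F j x) ∧
      ∫ x in s, G x = ∑' j, ∫ x in s, F j x := by
  have hinn : ∀ j, 0 ≤ ∫ x in s, F j x := fun j => setIntegral_nonneg hs (hnn j)
  have hsummInt : Summable (fun j => ∫ x in s, F j x) :=
    Summable.of_nonneg_of_le hinn hle hc
  have hnorm : ∀ j, (∫ x in s, ‖F j x‖) = ∫ x in s, F j x := fun j =>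
    setIntegral_congr_fun hs fun x hx => by
      rw [Real.norm_eq_abs, abs_of_nonneg (hnn j x hx)]
  have hswap : ∑' j, (∫ x in s, F j x) = ∫ x in s, (∑' j, F j x) := by
    refine integral_tsum_of_summable_integral_norm (fun j => hint j) ?_
    refine hsummInt.congr fun j => (hnorm j).symm
  have hGeq : ∫ x in s, G x = ∫ x in s, (∑' j, F j x) := setIntegral_congr_fun hs heq
  have haeG : 0 ≤ᵐ[volume.restrict s] G := by
    filter_upwards [ae_restrict_mem hs] with x hx
    rw [heq x hx]
    exact tsum_nonneg fun j => hnn j x hx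
  have haeF : ∀ j, 0 ≤ᵐ[volume.restrict s] (F j) := fun j => by
    filter_upwards [ae_restrict_mem hs] with x hx using hnn j x hx
  have hlin : ∫⁻ x in s, ENNReal.ofReal (G x) = ∑' j, ∫⁻ x in s, ENNReal.ofReal (F j x) := by
    rw [← lintegral_tsum (fun j => ((hFmeas j).ennreal_ofReal).aemeasurable)]
    refine lintegral_congr_ae ?_
    filter_upwards [ae_restrict_mem hs] with x hx
    rw [heq x hx, ENNReal.ofReal_tsum_of_nonneg (fun j => hnn j x hx) (hptsum x hx)]
  have hfin : ∫⁻ x in s, ENNReal.ofReal (G x) < ⊤ := by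
    rw [hlin]
    have h1 : ∀ j, ∫⁻ x in s, ENNReal.ofReal (F j x) = ENNReal.ofReal (∫ x in s, F j x) :=
      fun j => (ofReal_integral_eq_lintegral_ofReal (hint j) (haeF j)).symm
    simp_rw [h1]
    rw [← ENNReal.ofReal_tsum_of_nonneg hinn hsummInt]
    exact ENNReal.ofReal_lt_top
  have hintG : IntegrableOn G s := by
    refine ⟨hG.aestronglyMeasurable.restrict, ?_⟩
    rw [hasFiniteIntegral_iff_ofReal haeG]
    exact hfin
  exact ⟨hintG, hsummInt, by rw [hGeq, ← hswap]⟩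

/-! ### the survival function Fb -/

noncomputable def Fb (K g : ℝ) (t : ℝ) : ℝ := ∫ u in Set.Ioi t, ricianDensity K g u

lemma Fb_nonneg {K g : ℝ} (hK : 0 ≤ K) (hg : 0 < g) (t : ℝ) : 0 ≤ Fb K g t :=
  setIntegral_nonneg measurableSet_Ioi fun x _ => rician_nonneg hK hg x

/-- the summand in the tail expansion of `Fb` -/
noncomputable def FbTerm (K g : ℝ) (t : ℝ) (j : ℕ) : ℝ :=
  rA K g * rB K g j *
    (((j.factorial : ℝ) / ra K g ^ (j+1)) *
      (Real.exp (-(ra K g) * t) * ∑ m ∈ Finset.range (j+1), (ra K g)^m * t^m / (m.factorial : ℝ)))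

lemma Fb_expansion {K g : ℝ} (hK : 0 ≤ K) (hg : 0 < g) {t : ℝ} (ht : 0 ≤ t) :
    IntegrableOn (ricianDensity K g) (Set.Ioi t) ∧
    Summable (FbTerm K g t) ∧ Fb K g t = ∑' j, FbTerm K g t j := by
  have ha := ra_pos hK hg
  have hA := rA_pos hK hg
  set F : ℕ → ℝ → ℝ := fun j u => rA K g * rB K g j * (u^j * Real.exp (-(ra K g) * u)) with hF
  have hFmeas : ∀ j, Measurable (F j) := fun j =>
    measurable_const.mul ((measurable_id.pow_const j).mul
      (Real.measurable_exp.comp (measurable_id.const_mul _)))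
  have hnn : ∀ j, ∀ x ∈ Set.Ioi t, 0 ≤ F j x := by
    intro j x hx
    have hx0 : (0:ℝ) < x := lt_of_le_of_lt ht hx
    have := rB_nonneg hK hg j
    positivity
  have hint : ∀ j, IntegrableOn (F j) (Set.Ioi t) := fun j =>
    ((exp_tail (ra K g) ha j ht).1).const_mul _
  have hptsum : ∀ x ∈ Set.Ioi t, Summable (fun j => F j x) := by
    intro x hx
    refine ((summable_rB_pow hK hg x).mul_left (rA K g * Real.exp (-(ra K g) * x))).congr fun j => ?_
    simp only [hF]; ring
  have heq : ∀ x ∈ Set.Ioi t, ricianDensity K g x = ∑' j, F j x := by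
    intro x hx
    have hx0 : (0:ℝ) < x := lt_of_le_of_lt ht hx
    rw [ricianDensity, if_pos hx0]
    rw [mul_assoc, ← tsum_mul_left]
    rw [← tsum_mul_left]
    refine tsum_congr fun j => ?_
    simp only [hF]; ring
  have hle : ∀ j, ∫ x in Set.Ioi t, F j x ≤ (rA K g / ra K g) * (K^j / (j.factorial : ℝ)) := by
    intro j
    have h1 : ∫ x in Set.Ioi t, F j x
        = rA K g * rB K g j * ∫ x in Set.Ioi t, x^j * Real.exp (-(ra K g) * x) := by
      simp only [hF]
      rw [integral_const_mul]
    rw [h1]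
    have h2 := exp_tail_le (ra K g) ha j ht
    have h3 : rA K g * rB K g j * (∫ x in Set.Ioi t, x^j * Real.exp (-(ra K g) * x))
        ≤ rA K g * rB K g j * ((j.factorial : ℝ) / ra K g ^ (j+1)) := by
      refine mul_le_mul_of_nonneg_left h2 (mul_nonneg hA.le (rB_nonneg hK hg j))
    refine h3.trans_eq ?_
    have hfj := factorial_cast_pos j
    rw [rB]
    field_simp
    ring
  have hc : Summable (fun j => (rA K g / ra K g) * (K^j / (j.factorial : ℝ))) :=
    (Real.summable_pow_div_factorial _).mul_left _
  obtain ⟨hI, hS, hE⟩ := swap_helper measurableSet_Ioi (rician_measurable hK hg) hFmeas hnn hint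
    hptsum heq hc hle
  refine ⟨hI, ?_, ?_⟩
  · refine hS.congr fun j => ?_
    rw [show (∫ x in Set.Ioi t, F j x)
        = rA K g * rB K g j * ∫ x in Set.Ioi t, x^j * Real.exp (-(ra K g) * x) by
      simp only [hF]; rw [integral_const_mul]]
    rw [(exp_tail (ra K g) ha j ht).2]
    rfl
  · rw [Fb, hE]
    refine tsum_congr fun j => ?_
    rw [show (∫ x in Set.Ioi t, F j x)
        = rA K g * rB K g j * ∫ x in Set.Ioi t, x^j * Real.exp (-(ra K g) * x) by
      simp only [hF]; rw [integral_const_mul]]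
    rw [(exp_tail (ra K g) ha j ht).2]
    rfl

lemma Fb_pos {K g : ℝ} (hK : 0 ≤ K) (hg : 0 < g) {t : ℝ} (ht : 0 < t) : 0 < Fb K g t := by
  obtain ⟨_, hS, hE⟩ := Fb_expansion hK hg ht.le
  have ha := ra_pos hK hg
  have hA := rA_pos hK hg
  have hterm0 : 0 < FbTerm K g t 0 := by
    rw [FbTerm, rB_zero]
    have he := Real.exp_pos (-(ra K g) * t)
    simp only [Nat.factorial_zero, Nat.cast_one, pow_one, zero_add, Finset.range_one,
      Finset.sum_singleton, pow_zero, one_mul, mul_one]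
    positivity
  have hnn : ∀ j, 0 ≤ FbTerm K g t j := by
    intro j
    rw [FbTerm]
    have h1 := rB_nonneg hK hg j
    have h2 : 0 ≤ ∑ m ∈ Finset.range (j+1), (ra K g)^m * t^m / (m.factorial : ℝ) := by
      refine Finset.sum_nonneg fun m _ => ?_
      have := factorial_cast_pos m
      positivity
    have he := (Real.exp_pos (-(ra K g) * t)).le
    positivity
  rw [hE]
  calc (0:ℝ) < FbTerm K g t 0 := hterm0
    _ ≤ ∑' j, FbTerm K g t j := Summable.le_tsum hS 0 fun j _ => hnn j

lemma rician_integrableOn_Ioi {K g : ℝ} (hK : 0 ≤ K) (hg : 0 < g) (t : ℝ) :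
    IntegrableOn (ricianDensity K g) (Set.Ioi t) := by
  rcases le_or_gt 0 t with ht | ht
  · exact (Fb_expansion hK hg ht).1
  · rw [← Set.Ioc_union_Ioi_eq_Ioi ht.le]
    refine IntegrableOn.union ?_ (Fb_expansion hK hg le_rfl).1
    have hz : ∀ x ∈ Set.Ioc t 0, ricianDensity K g x = 0 := by
      intro x hx
      rw [ricianDensity, if_neg (not_lt.mpr hx.2)]
    refine (integrableOn_congr_fun hz measurableSet_Ioc).mpr (integrableOn_zero)

lemma Fb_antitone {K g : ℝ} (hK : 0 ≤ K) (hg : 0 < g) : Antitone (Fb K g) := by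
  intro x y hxy
  refine setIntegral_mono_set (rician_integrableOn_Ioi hK hg x) ?_
    (HasSubset.Subset.eventuallyLE (Set.Ioi_subset_Ioi hxy))
  exact Eventually.of_forall fun x => rician_nonneg hK hg x

lemma Fb_split {K g : ℝ} (hK : 0 ≤ K) (hg : 0 < g) {t s : ℝ} (ht : 0 < t) (hts : t ≤ s) :
    Fb K g t = (∫ u in t..s, ricianDensity K g u) + Fb K g s := by
  have hI := (Fb_expansion hK hg ht.le).1
  have hIoc : IntegrableOn (ricianDensity K g) (Set.Ioc t s) :=
    hI.mono_set Set.Ioc_subset_Ioi_self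
  have hIoi : IntegrableOn (ricianDensity K g) (Set.Ioi s) :=
    hI.mono_set (Set.Ioi_subset_Ioi hts)
  rw [intervalIntegral.integral_of_le hts, Fb, Fb,
    ← setIntegral_union (Set.Ioc_disjoint_Ioi le_rfl) measurableSet_Ioi hIoc hIoi,
    Set.Ioc_union_Ioi_eq_Ioi hts]

lemma Fb_tendsto_zero {K g : ℝ} (hK : 0 ≤ K) (hg : 0 < g) :
    Tendsto (Fb K g) atTop (𝓝 0) := by
  have h1 : Tendsto (fun s => ∫ u in (1:ℝ)..s, ricianDensity K g u) atTop (𝓝 (Fb K g 1)) :=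
    intervalIntegral_tendsto_integral_Ioi 1 (Fb_expansion hK hg one_pos.le).1 tendsto_id
  have h2 : Tendsto (fun s => Fb K g 1 - ∫ u in (1:ℝ)..s, ricianDensity K g u) atTop
      (𝓝 (Fb K g 1 - Fb K g 1)) := tendsto_const_nhds.sub h1
  rw [sub_self] at h2
  refine h2.congr' ?_
  filter_upwards [eventually_ge_atTop (1:ℝ)] with s hs
  rw [Fb_split hK hg one_pos hs]
  ring

lemma Fb_hasDerivAt {K g : ℝ} (hK : 0 ≤ K) (hg : 0 < g) {t : ℝ} (ht : 0 < t) :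
    HasDerivAt (Fb K g) (-(ricianDensity K g t)) t := by
  set t₀ := t/2 with ht₀def
  have ht₀ : 0 < t₀ := by positivity
  have ht₀t : t₀ < t := by rw [ht₀def]; linarith
  have hI := (Fb_expansion hK hg ht₀.le).1
  have hiv : IntervalIntegrable (ricianDensity K g) volume t₀ t := by
    rw [intervalIntegrable_iff]
    exact hI.mono_set (fun x hx => (Set.uIoc_of_le ht₀t.le ▸ hx).1.trans_le le_rfl |>.trans_le
      (le_refl x) |> fun h => h)
  have hmeasAt : StronglyMeasurableAtFilter (ricianDensity K g) (𝓝 t) volume :=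
    ⟨Set.univ, univ_mem, ((rician_measurable hK hg).stronglyMeasurable).aestronglyMeasurable.restrict⟩
  have hd : HasDerivAt (fun s => Fb K g t₀ - ∫ u in t₀..s, ricianDensity K g u)
      (-(ricianDensity K g t)) t := by
    have := intervalIntegral.integral_hasDerivAt_right hiv hmeasAt (rician_continuousAt hK hg ht)
    simpa using (this.const_sub (Fb K g t₀))
  refine hd.congr_of_eventuallyEq ?_
  filter_upwards [isOpen_Ioi.mem_nhds (show t₀ < t from ht₀t)] with s hs
  have := Fb_split hK hg ht₀ (le_of_lt hs)
  linarith

lemma Fb_measurable {K g : ℝ} (hK : 0 ≤ K) (hg : 0 < g) : Measurable (Fb K g) :=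
  (Fb_antitone hK hg).measurable

/-! ### pointwise series expansions -/

noncomputable def DD (K g : ℝ) (j : ℕ) (γ : ℝ) : ℝ :=
  rBt K g j * (j.factorial : ℝ) * ∑ m ∈ Finset.range (j+1), (ra K g)^m * γ^m / (m.factorial : ℝ)

lemma rBt_mul_factorial {K g : ℝ} (hK : 0 ≤ K) (hg : 0 < g) (j : ℕ) :
    rBt K g j * (j.factorial : ℝ) = K^j / ((j.factorial : ℝ) * ra K g) := by
  have ha := (ra_pos hK hg).ne'
  have hf := (factorial_cast_pos j).ne'
  rw [rBt, rB]
  field_simp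
  ring

lemma DD_nonneg {K g : ℝ} (hK : 0 ≤ K) (hg : 0 < g) (j : ℕ) {γ : ℝ} (hγ : 0 ≤ γ) :
    0 ≤ DD K g j γ := by
  have h1 := rBt_nonneg hK hg j
  have ha := (ra_pos hK hg).le
  refine mul_nonneg (mul_nonneg h1 (factorial_cast_pos j).le) (Finset.sum_nonneg fun m _ => ?_)
  have := (factorial_cast_pos m).le
  positivity

lemma DD_le {K g : ℝ} (hK : 0 ≤ K) (hg : 0 < g) (j : ℕ) {γ : ℝ} (hγ : 0 ≤ γ) :
    DD K g j γ ≤ K^j / ((j.factorial : ℝ) * ra K g) * Real.exp (ra K g * γ) := by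
  rw [DD, rBt_mul_factorial hK hg j]
  have ha := ra_pos hK hg
  have hf := factorial_cast_pos j
  refine mul_le_mul_of_nonneg_left ?_ (by positivity)
  have h1 : ∑ m ∈ Finset.range (j+1), (ra K g)^m * γ^m / (m.factorial : ℝ)
      = ∑ m ∈ Finset.range (j+1), (ra K g * γ)^m / (m.factorial : ℝ) := by
    refine Finset.sum_congr rfl fun m _ => by rw [mul_pow]
  rw [h1]
  exact Real.sum_le_exp_of_nonneg (by positivity) (j+1)

lemma summable_DD {K g : ℝ} (hK : 0 ≤ K) (hg : 0 < g) {γ : ℝ} (hγ : 0 ≤ γ) :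
    Summable (fun j => DD K g j γ) := by
  have ha := ra_pos hK hg
  refine Summable.of_nonneg_of_le (fun j => DD_nonneg hK hg j hγ)
    (fun j => (DD_le hK hg j hγ).trans_eq (by ring))
    (((Real.summable_pow_div_factorial K).div_const (ra K g)).mul_right (Real.exp (ra K g * γ)))

lemma fden_tsum {K g : ℝ} (hK : 0 ≤ K) (hg : 0 < g) {x : ℝ} (hx : 0 < x) :
    ricianDensity K g x = ∑' n, rA K g * rB K g n * x^n * Real.exp (-(ra K g)*x) := by
  rw [ricianDensity, if_pos hx, mul_assoc, ← tsum_mul_left, ← tsum_mul_left]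
  exact tsum_congr fun n => by ring

lemma summable_fden_tsum {K g : ℝ} (hK : 0 ≤ K) (hg : 0 < g) (x : ℝ) :
    Summable (fun n => rA K g * rB K g n * x^n * Real.exp (-(ra K g)*x)) := by
  refine ((summable_rB_pow hK hg x).mul_left (rA K g)).mul_right (Real.exp (-(ra K g)*x)) |>.congr
    fun n => by ring

lemma Fb_tsum {K g : ℝ} (hK : 0 ≤ K) (hg : 0 < g) {x : ℝ} (hx : 0 < x) :
    Fb K g x = ∑' j, rA K g * DD K g j x * Real.exp (-(ra K g)*x) := by
  rw [(Fb_expansion hK hg hx.le).2.2]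
  refine tsum_congr fun j => ?_
  rw [FbTerm, DD]
  have ha := (ra_pos hK hg).ne'
  have hf := (factorial_cast_pos j).ne'
  rw [rBt]
  field_simp

lemma summable_Fb_tsum {K g : ℝ} (hK : 0 ≤ K) (hg : 0 < g) {x : ℝ} (hx : 0 ≤ x) :
    Summable (fun j => rA K g * DD K g j x * Real.exp (-(ra K g)*x)) :=
  (((summable_DD hK hg hx).mul_left (rA K g)).mul_right (Real.exp (-(ra K g)*x)))

/-! ### log-weighted tail integrals -/

lemma log_int (c : ℝ) (hc : 0 < c) (p : ℕ) {γ₀ : ℝ} (hγ₀ : 0 < γ₀) :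
    IntegrableOn (fun γ : ℝ => γ^p * Real.exp (-c*γ) * Real.log (γ/γ₀)) (Set.Ioi γ₀) ∧
    (∀ γ ∈ Set.Ioi γ₀, 0 ≤ γ^p * Real.exp (-c*γ) * Real.log (γ/γ₀)) ∧
    ∫ γ in Set.Ioi γ₀, γ^p * Real.exp (-c*γ) * Real.log (γ/γ₀)
      ≤ (1/γ₀) * (((p+1).factorial : ℝ) / c^(p+2)) := by
  have hnn : ∀ γ ∈ Set.Ioi γ₀, 0 ≤ γ^p * Real.exp (-c*γ) * Real.log (γ/γ₀) := by
    intro γ hγ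
    have hγ0 : 0 < γ := hγ₀.trans hγ
    have hlog : 0 ≤ Real.log (γ/γ₀) := Real.log_nonneg ((one_le_div hγ₀).mpr (le_of_lt hγ))
    positivity
  have hble : ∀ γ ∈ Set.Ioi γ₀, γ^p * Real.exp (-c*γ) * Real.log (γ/γ₀)
      ≤ (1/γ₀) * (γ^(p+1) * Real.exp (-c*γ)) := by
    intro γ hγ
    have hγ0 : 0 < γ := hγ₀.trans hγ
    have hlog : Real.log (γ/γ₀) ≤ γ/γ₀ := by
      refine (Real.log_le_sub_one_of_pos (by positivity)).trans ?_
      linarith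
    calc γ^p * Real.exp (-c*γ) * Real.log (γ/γ₀) ≤ γ^p * Real.exp (-c*γ) * (γ/γ₀) := by
          refine mul_le_mul_of_nonneg_left hlog (by positivity)
      _ = (1/γ₀) * (γ^(p+1) * Real.exp (-c*γ)) := by rw [pow_succ]; ring
  have hbint : IntegrableOn (fun γ : ℝ => (1/γ₀) * (γ^(p+1) * Real.exp (-c*γ))) (Set.Ioi γ₀) :=
    ((exp_tail c hc (p+1) hγ₀.le).1).const_mul _
  have hmeas : Measurable (fun γ : ℝ => γ^p * Real.exp (-c*γ) * Real.log (γ/γ₀)) := by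
    exact ((measurable_id.pow_const p).mul
      (Real.measurable_exp.comp (measurable_id.const_mul _))).mul
      (Real.measurable_log.comp (measurable_id.div_const _))
  have hint : IntegrableOn (fun γ : ℝ => γ^p * Real.exp (-c*γ) * Real.log (γ/γ₀)) (Set.Ioi γ₀) := by
    refine Integrable.mono' hbint hmeas.aestronglyMeasurable.restrict ?_
    filter_upwards [ae_restrict_mem measurableSet_Ioi] with γ hγ
    rw [Real.norm_eq_abs, abs_of_nonneg (hnn γ hγ)]
    exact hble γ hγ
  refine ⟨hint, hnn, ?_⟩
  have h1 : ∫ γ in Set.Ioi γ₀, γ^p * Real.exp (-c*γ) * Real.log (γ/γ₀)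
      ≤ ∫ γ in Set.Ioi γ₀, (1/γ₀) * (γ^(p+1) * Real.exp (-c*γ)) :=
    setIntegral_mono_on hint hbint measurableSet_Ioi hble
  refine h1.trans ?_
  rw [integral_const_mul]
  exact mul_le_mul_of_nonneg_left (exp_tail_le c hc (p+1) hγ₀.le) (by positivity)

/-! ### the density of the minimum -/

noncomputable def gf (Kx gx Ky gy : ℝ) (t : ℝ) : ℝ :=
  ricianDensity Kx gx t * Fb Ky gy t + ricianDensity Ky gy t * Fb Kx gx t

lemma gf_measurable {Kx gx Ky gy : ℝ} (hKx : 0 ≤ Kx) (hgx : 0 < gx) (hKy : 0 ≤ Ky) (hgy : 0 < gy) :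
    Measurable (gf Kx gx Ky gy) :=
  ((rician_measurable hKx hgx).mul (Fb_measurable hKy hgy)).add
    ((rician_measurable hKy hgy).mul (Fb_measurable hKx hgx))

lemma gf_nonneg {Kx gx Ky gy : ℝ} (hKx : 0 ≤ Kx) (hgx : 0 < gx) (hKy : 0 ≤ Ky) (hgy : 0 < gy)
    (t : ℝ) : 0 ≤ gf Kx gx Ky gy t :=
  add_nonneg (mul_nonneg (rician_nonneg hKx hgx t) (Fb_nonneg hKy hgy t))
    (mul_nonneg (rician_nonneg hKy hgy t) (Fb_nonneg hKx hgx t))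

lemma gf_pos {Kx gx Ky gy : ℝ} (hKx : 0 ≤ Kx) (hgx : 0 < gx) (hKy : 0 ≤ Ky) (hgy : 0 < gy)
    {t : ℝ} (ht : 0 < t) : 0 < gf Kx gx Ky gy t :=
  add_pos_of_pos_of_nonneg (mul_pos (rician_pos hKx hgx ht) (Fb_pos hKy hgy ht))
    (mul_nonneg (rician_nonneg hKy hgy t) (Fb_nonneg hKx hgx t))

lemma P_hasDerivAt {Kx gx Ky gy : ℝ} (hKx : 0 ≤ Kx) (hgx : 0 < gx) (hKy : 0 ≤ Ky) (hgy : 0 < gy)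
    {t : ℝ} (ht : 0 < t) :
    HasDerivAt (fun s => -(Fb Kx gx s * Fb Ky gy s)) (gf Kx gx Ky gy t) t := by
  have h := ((Fb_hasDerivAt hKx hgx ht).fun_mul (Fb_hasDerivAt hKy hgy ht)).neg
  refine h.congr_deriv ?_
  rw [gf]
  ring

lemma gf_tail {Kx gx Ky gy : ℝ} (hKx : 0 ≤ Kx) (hgx : 0 < gx) (hKy : 0 ≤ Ky) (hgy : 0 < gy)
    {t : ℝ} (ht : 0 < t) :
    IntegrableOn (gf Kx gx Ky gy) (Set.Ioi t) ∧
    ∫ u in Set.Ioi t, gf Kx gx Ky gy u = Fb Kx gx t * Fb Ky gy t := by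
  have hcont : ContinuousWithinAt (fun s => -(Fb Kx gx s * Fb Ky gy s)) (Set.Ici t) t :=
    (P_hasDerivAt hKx hgx hKy hgy ht).continuousAt.continuousWithinAt
  have hderiv : ∀ x ∈ Set.Ioi t, HasDerivAt (fun s => -(Fb Kx gx s * Fb Ky gy s))
      (gf Kx gx Ky gy x) x := fun x hx => P_hasDerivAt hKx hgx hKy hgy (ht.trans hx)
  have hpos : ∀ x ∈ Set.Ioi t, 0 ≤ gf Kx gx Ky gy x := fun x _ =>
    gf_nonneg hKx hgx hKy hgy x
  have htd : Tendsto (fun s => -(Fb Kx gx s * Fb Ky gy s)) atTop (𝓝 0) := by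
    have := ((Fb_tendsto_zero hKx hgx).mul (Fb_tendsto_zero hKy hgy)).neg
    simpa using this
  refine ⟨integrableOn_Ioi_deriv_of_nonneg hcont hderiv hpos htd, ?_⟩
  rw [integral_Ioi_of_hasDerivAt_of_nonneg hcont hderiv hpos htd]
  ring

/-! ### the Cauchy-product expansion of the weighted density -/

noncomputable def Wfun (Kx gx Ky gy : ℝ) (k : ℕ) (γ : ℝ) : ℝ :=
  rA Kx gx * rA Ky gy * Real.exp (-(ra Kx gx + ra Ky gy)*γ) *
    ∑ n ∈ Finset.range (k+1),
      (rB Kx gx n * γ^n * DD Ky gy (k-n) γ + rB Ky gy n * γ^n * DD Kx gx (k-n) γ)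

noncomputable def T1 (Kx gx Ky gy γ₀ : ℝ) (n j : ℕ) (γ : ℝ) : ℝ :=
  rA Kx gx * rA Ky gy * rBt Kx gx n * rBt Ky gy j * ra Kx gx^(n+1) * (j.factorial : ℝ) *
    ∑ m ∈ Finset.range (j+1), ra Ky gy^m/(m.factorial : ℝ) *
      (γ^(n+m) * Real.exp (-(ra Kx gx + ra Ky gy)*γ) * Real.log (γ/γ₀))

noncomputable def T2 (Kx gx Ky gy γ₀ : ℝ) (n j : ℕ) (γ : ℝ) : ℝ :=
  rA Kx gx * rA Ky gy * rBt Kx gx n * rBt Ky gy j * ra Ky gy^(j+1) * (n.factorial : ℝ) *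
    ∑ m ∈ Finset.range (n+1), ra Kx gx^m/(m.factorial : ℝ) *
      (γ^(j+m) * Real.exp (-(ra Kx gx + ra Ky gy)*γ) * Real.log (γ/γ₀))

noncomputable def Ffun (Kx gx Ky gy γ₀ : ℝ) (k : ℕ) (γ : ℝ) : ℝ :=
  ∑ n ∈ Finset.range (k+1),
    (T1 Kx gx Ky gy γ₀ n (k-n) γ + T2 Kx gx Ky gy γ₀ n (k-n) γ)

lemma t1_eq {Kx gx Ky gy : ℝ} (hKx : 0 ≤ Kx) (hgx : 0 < gx) (γ₀ : ℝ) (n j : ℕ) (γ : ℝ) :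
    T1 Kx gx Ky gy γ₀ n j γ
      = rA Kx gx * rA Ky gy * Real.exp (-(ra Kx gx + ra Ky gy)*γ) *
          (rB Kx gx n * γ^n * DD Ky gy j γ) * Real.log (γ/γ₀) := by
  rw [T1, DD, rB_eq_rBt hKx hgx n]
  rw [Finset.mul_sum]
  rw [show (rA Kx gx * rA Ky gy * Real.exp (-(ra Kx gx + ra Ky gy)*γ) *
      (rBt Kx gx n * ra Kx gx ^ (n+1) * γ^n *
        (rBt Ky gy j * (j.factorial : ℝ) *
          ∑ m ∈ Finset.range (j+1), (ra Ky gy)^m * γ^m / (m.factorial : ℝ))) *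
      Real.log (γ/γ₀))
    = ∑ m ∈ Finset.range (j+1),
        (rA Kx gx * rA Ky gy * Real.exp (-(ra Kx gx + ra Ky gy)*γ) *
          (rBt Kx gx n * ra Kx gx ^ (n+1) * γ^n *
            (rBt Ky gy j * (j.factorial : ℝ) * ((ra Ky gy)^m * γ^m / (m.factorial : ℝ)))) *
          Real.log (γ/γ₀)) by
    rw [← Finset.sum_mul, ← Finset.mul_sum, ← Finset.mul_sum, ← Finset.mul_sum]]
  refine Finset.sum_congr rfl fun m _ => ?_
  rw [pow_add]
  ring

lemma t2_eq {Kx gx Ky gy : ℝ} (hKy : 0 ≤ Ky) (hgy : 0 < gy) (γ₀ : ℝ) (n j : ℕ) (γ : ℝ) :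
    T2 Kx gx Ky gy γ₀ n j γ
      = rA Kx gx * rA Ky gy * Real.exp (-(ra Kx gx + ra Ky gy)*γ) *
          (rB Ky gy j * γ^j * DD Kx gx n γ) * Real.log (γ/γ₀) := by
  rw [T2, DD, rB_eq_rBt hKy hgy j]
  rw [Finset.mul_sum]
  rw [show (rA Kx gx * rA Ky gy * Real.exp (-(ra Kx gx + ra Ky gy)*γ) *
      (rBt Ky gy j * ra Ky gy ^ (j+1) * γ^j *
        (rBt Kx gx n * (n.factorial : ℝ) *
          ∑ m ∈ Finset.range (n+1), (ra Kx gx)^m * γ^m / (m.factorial : ℝ))) *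
      Real.log (γ/γ₀))
    = ∑ m ∈ Finset.range (n+1),
        (rA Kx gx * rA Ky gy * Real.exp (-(ra Kx gx + ra Ky gy)*γ) *
          (rBt Ky gy j * ra Ky gy ^ (j+1) * γ^j *
            (rBt Kx gx n * (n.factorial : ℝ) * ((ra Kx gx)^m * γ^m / (m.factorial : ℝ)))) *
          Real.log (γ/γ₀)) by
    rw [← Finset.sum_mul, ← Finset.mul_sum, ← Finset.mul_sum, ← Finset.mul_sum]]
  refine Finset.sum_congr rfl fun m _ => ?_
  rw [pow_add]
  ring

lemma F_eq_LW {Kx gx Ky gy : ℝ} (hKx : 0 ≤ Kx) (hgx : 0 < gx) (hKy : 0 ≤ Ky) (hgy : 0 < gy)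
    (γ₀ : ℝ) (k : ℕ) (γ : ℝ) :
    Ffun Kx gx Ky gy γ₀ k γ = Real.log (γ/γ₀) * Wfun Kx gx Ky gy k γ := by
  rw [Ffun, Wfun]
  have hrefl : ∑ n ∈ Finset.range (k+1), T2 Kx gx Ky gy γ₀ n (k-n) γ
      = ∑ n ∈ Finset.range (k+1),
          (rA Kx gx * rA Ky gy * Real.exp (-(ra Kx gx + ra Ky gy)*γ) *
            (rB Ky gy n * γ^n * DD Kx gx (k-n) γ) * Real.log (γ/γ₀)) := by
    have h1 : ∀ n ∈ Finset.range (k+1), T2 Kx gx Ky gy γ₀ n (k-n) γ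
        = (fun m => rA Kx gx * rA Ky gy * Real.exp (-(ra Kx gx + ra Ky gy)*γ) *
            (rB Ky gy m * γ^m * DD Kx gx (k-m) γ) * Real.log (γ/γ₀)) (k-n) := by
      intro n hn
      have hn' : n ≤ k := Nat.lt_succ_iff.mp (Finset.mem_range.mp hn)
      rw [t2_eq hKy hgy γ₀ n (k-n) γ]
      simp only [Nat.sub_sub_self hn']
    rw [Finset.sum_congr rfl h1]
    simpa using Finset.sum_range_reflect (fun m => rA Kx gx * rA Ky gy *
      Real.exp (-(ra Kx gx + ra Ky gy)*γ) *
      (rB Ky gy m * γ^m * DD Kx gx (k-m) γ) * Real.log (γ/γ₀)) (k+1)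
  rw [Finset.sum_add_distrib, hrefl]
  rw [Finset.sum_congr rfl (fun n _ => t1_eq hKx hgx γ₀ n (k-n) γ)]
  rw [← Finset.sum_add_distrib, Finset.mul_sum, Finset.mul_sum]
  refine Finset.sum_congr rfl fun n _ => ?_
  ring

lemma exp_prod_eq (a b : ℝ) (γ : ℝ) :
    Real.exp (-(a + b)*γ) * Real.exp (b*γ) = Real.exp (-a*γ) := by
  rw [← Real.exp_add]; congr 1; ring

lemma Wfun_nonneg {Kx gx Ky gy : ℝ} (hKx : 0 ≤ Kx) (hgx : 0 < gx) (hKy : 0 ≤ Ky) (hgy : 0 < gy)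
    (k : ℕ) {γ : ℝ} (hγ : 0 ≤ γ) : 0 ≤ Wfun Kx gx Ky gy k γ := by
  rw [Wfun]
  refine mul_nonneg (mul_nonneg (mul_nonneg (rA_pos hKx hgx).le (rA_pos hKy hgy).le)
    (Real.exp_pos _).le) (Finset.sum_nonneg fun n _ => add_nonneg ?_ ?_)
  · exact mul_nonneg (mul_nonneg (rB_nonneg hKx hgx n) (pow_nonneg hγ n))
      (DD_nonneg hKy hgy _ hγ)
  · exact mul_nonneg (mul_nonneg (rB_nonneg hKy hgy n) (pow_nonneg hγ n))
      (DD_nonneg hKx hgx _ hγ)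

lemma gf_tsum {Kx gx Ky gy : ℝ} (hKx : 0 ≤ Kx) (hgx : 0 < gx) (hKy : 0 ≤ Ky) (hgy : 0 < gy)
    {x : ℝ} (hx : 0 < x) :
    Summable (fun k => Wfun Kx gx Ky gy k x) ∧
    gf Kx gx Ky gy x = ∑' k, Wfun Kx gx Ky gy k x := by
  set u : ℕ → ℝ := fun n => rA Kx gx * rB Kx gx n * x^n * Real.exp (-(ra Kx gx)*x) with hu
  set v : ℕ → ℝ := fun j => rA Ky gy * DD Ky gy j x * Real.exp (-(ra Ky gy)*x) with hv
  set u' : ℕ → ℝ := fun n => rA Ky gy * rB Ky gy n * x^n * Real.exp (-(ra Ky gy)*x) with hu'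
  set v' : ℕ → ℝ := fun j => rA Kx gx * DD Kx gx j x * Real.exp (-(ra Kx gx)*x) with hv'
  have hsu : Summable u := summable_fden_tsum hKx hgx x
  have hsv : Summable v := summable_Fb_tsum hKy hgy hx.le
  have hsu' : Summable u' := summable_fden_tsum hKy hgy x
  have hsv' : Summable v' := summable_Fb_tsum hKx hgx hx.le
  have hnu : Summable (fun n => ‖u n‖) := by simpa [Real.norm_eq_abs] using hsu.abs
  have hnv : Summable (fun n => ‖v n‖) := by simpa [Real.norm_eq_abs] using hsv.abs
  have hnu' : Summable (fun n => ‖u' n‖) := by simpa [Real.norm_eq_abs] using hsu'.abs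
  have hnv' : Summable (fun n => ‖v' n‖) := by simpa [Real.norm_eq_abs] using hsv'.abs
  have hkey : ∀ k, (∑ n ∈ Finset.range (k+1), u n * v (k-n))
      + (∑ n ∈ Finset.range (k+1), u' n * v' (k-n)) = Wfun Kx gx Ky gy k x := by
    intro k
    rw [Wfun, Finset.mul_sum, ← Finset.sum_add_distrib]
    refine Finset.sum_congr rfl fun n _ => ?_
    have he1 := exp_prod_eq (ra Kx gx) (ra Ky gy) x
    have he2 := exp_prod_eq (ra Ky gy) (ra Kx gx) x
    rw [hu, hv, hu', hv']
    simp only []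
    have h1 : rA Kx gx * rB Kx gx n * x^n * Real.exp (-(ra Kx gx)*x) *
        (rA Ky gy * DD Ky gy (k-n) x * Real.exp (-(ra Ky gy)*x))
        = rA Kx gx * rA Ky gy * Real.exp (-(ra Kx gx + ra Ky gy)*x) *
          (rB Kx gx n * x^n * DD Ky gy (k-n) x) := by
      have he : Real.exp (-(ra Kx gx)*x) * Real.exp (-(ra Ky gy)*x)
          = Real.exp (-(ra Kx gx + ra Ky gy)*x) := by
        rw [← Real.exp_add]; congr 1; ring
      linear_combination (rA Kx gx * rB Kx gx n * x^n * (rA Ky gy * DD Ky gy (k-n) x)) * he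
    have h2 : rA Ky gy * rB Ky gy n * x^n * Real.exp (-(ra Ky gy)*x) *
        (rA Kx gx * DD Kx gx (k-n) x * Real.exp (-(ra Kx gx)*x))
        = rA Kx gx * rA Ky gy * Real.exp (-(ra Kx gx + ra Ky gy)*x) *
          (rB Ky gy n * x^n * DD Kx gx (k-n) x) := by
      have he : Real.exp (-(ra Ky gy)*x) * Real.exp (-(ra Kx gx)*x)
          = Real.exp (-(ra Kx gx + ra Ky gy)*x) := by
        rw [← Real.exp_add]; congr 1; ring
      linear_combination (rA Ky gy * rB Ky gy n * x^n * (rA Kx gx * DD Kx gx (k-n) x)) * he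
    rw [h1, h2]
    ring
  have hS1 : Summable (fun k => ∑ n ∈ Finset.range (k+1), u n * v (k-n)) :=
    summable_sum_mul_range_of_summable_norm' hnu hsu hnv hsv
  have hS2 : Summable (fun k => ∑ n ∈ Finset.range (k+1), u' n * v' (k-n)) :=
    summable_sum_mul_range_of_summable_norm' hnu' hsu' hnv' hsv'
  constructor
  · exact ((hS1.add hS2).congr hkey)
  · have e1 : ricianDensity Kx gx x = ∑' n, u n := fden_tsum hKx hgx hx
    have e2 : Fb Ky gy x = ∑' j, v j := Fb_tsum hKy hgy hx
    have e3 : ricianDensity Ky gy x = ∑' n, u' n := fden_tsum hKy hgy hx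
    have e4 : Fb Kx gx x = ∑' j, v' j := Fb_tsum hKx hgx hx
    rw [gf, e1, e2, e3, e4,
      tsum_mul_tsum_eq_tsum_sum_range_of_summable_norm hnu hnv,
      tsum_mul_tsum_eq_tsum_sum_range_of_summable_norm hnu' hnv',
      ← Summable.tsum_add hS1 hS2]
    exact tsum_congr hkey

/-! ### bounds for the summability of the main series -/

noncomputable def qq (K g : ℝ) (j : ℕ) : ℝ := K^j / ((j.factorial : ℝ) * ra K g)

lemma qq_nonneg {K g : ℝ} (hK : 0 ≤ K) (hg : 0 < g) (j : ℕ) : 0 ≤ qq K g j := by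
  have := ra_pos hK hg
  have := factorial_cast_pos j
  rw [qq]; positivity

lemma summable_qq {K g : ℝ} (hK : 0 ≤ K) (hg : 0 < g) : Summable (qq K g) := by
  refine ((Real.summable_pow_div_factorial K).div_const (ra K g)).congr fun j => ?_
  rw [qq, div_div]

noncomputable def px (K g : ℝ) (n : ℕ) : ℝ := (2*K)^n / (n.factorial : ℝ) * (1 / ra K g^2)

lemma px_nonneg {K g : ℝ} (hK : 0 ≤ K) (hg : 0 < g) (n : ℕ) : 0 ≤ px K g n := by
  have := ra_pos hK hg
  have := factorial_cast_pos n
  rw [px]; positivity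

lemma summable_px {K g : ℝ} (hK : 0 ≤ K) (hg : 0 < g) : Summable (px K g) :=
  (Real.summable_pow_div_factorial (2*K)).mul_right _

lemma rB_tail_le {K g : ℝ} (hK : 0 ≤ K) (hg : 0 < g) (n : ℕ) :
    rB K g n * (((n+1).factorial : ℝ) / ra K g^(n+2)) ≤ px K g n := by
  have ha := ra_pos hK hg
  have hf := factorial_cast_pos n
  have h1 : rB K g n * (((n+1).factorial : ℝ) / ra K g^(n+2))
      = K^n * ((n:ℝ)+1) / ((n.factorial : ℝ) * ra K g^2) := by
    rw [rB, Nat.factorial_succ]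
    push_cast
    field_simp
    ring
  rw [h1, px]
  have h2 : ((n:ℝ)+1) ≤ 2^n := by
    have := Nat.lt_two_pow_self (n := n)
    exact_mod_cast Nat.succ_le_of_lt this
  have h3 : K^n * ((n:ℝ)+1) ≤ K^n * 2^n := by
    exact mul_le_mul_of_nonneg_left h2 (pow_nonneg hK n)
  calc K^n * ((n:ℝ)+1) / ((n.factorial : ℝ) * ra K g^2)
      ≤ K^n * 2^n / ((n.factorial : ℝ) * ra K g^2) := by
        gcongr
    _ = (2*K)^n / (n.factorial : ℝ) * (1 / ra K g^2) := by
        rw [mul_pow]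
        field_simp

/-- the key pointwise bound for a single Cauchy-product term -/
lemma key_term_le {K1 g1 K2 g2 : ℝ} (hK1 : 0 ≤ K1) (hg1 : 0 < g1) (hK2 : 0 ≤ K2) (hg2 : 0 < g2)
    {γ₀ γ : ℝ} (hγ₀ : 0 < γ₀) (hγ : γ₀ < γ) (C c' : ℝ) (hC : 0 ≤ C)
    (hce : Real.exp (-c'*γ) * Real.exp (ra K2 g2*γ) = Real.exp (-(ra K1 g1)*γ)) (n j : ℕ) :
    Real.log (γ/γ₀) * (C * Real.exp (-c'*γ)) * (rB K1 g1 n * γ^n * DD K2 g2 j γ)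
      ≤ (C/γ₀) * (rB K1 g1 n * qq K2 g2 j * (γ^(n+1) * Real.exp (-(ra K1 g1)*γ))) := by
  have hγ0 : 0 < γ := hγ₀.trans hγ
  have hlog0 : 0 ≤ Real.log (γ/γ₀) := Real.log_nonneg ((one_le_div hγ₀).mpr hγ.le)
  have hlog : Real.log (γ/γ₀) ≤ γ/γ₀ := by
    refine (Real.log_le_sub_one_of_pos (by positivity)).trans (by linarith)
  have hBnn : 0 ≤ rB K1 g1 n * γ^n * DD K2 g2 j γ :=
    mul_nonneg (mul_nonneg (rB_nonneg hK1 hg1 n) (pow_nonneg hγ0.le n))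
      (DD_nonneg hK2 hg2 j hγ0.le)
  have step1 : Real.log (γ/γ₀) * (C * Real.exp (-c'*γ)) * (rB K1 g1 n * γ^n * DD K2 g2 j γ)
      ≤ (γ/γ₀) * (C * Real.exp (-c'*γ)) * (rB K1 g1 n * γ^n * DD K2 g2 j γ) := by
    refine mul_le_mul_of_nonneg_right (mul_le_mul_of_nonneg_right hlog ?_) hBnn
    positivity
  refine step1.trans ?_
  have hDD := DD_le hK2 hg2 j hγ0.le
  have step2 : (γ/γ₀) * (C * Real.exp (-c'*γ)) * (rB K1 g1 n * γ^n * DD K2 g2 j γ)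
      ≤ (γ/γ₀) * (C * Real.exp (-c'*γ)) * (rB K1 g1 n * γ^n *
          (qq K2 g2 j * Real.exp (ra K2 g2 * γ))) := by
    refine mul_le_mul_of_nonneg_left ?_ (by positivity)
    refine mul_le_mul_of_nonneg_left ?_
      (mul_nonneg (rB_nonneg hK1 hg1 n) (pow_nonneg hγ0.le n))
    refine hDD.trans_eq ?_
    rw [qq]
  refine step2.trans_eq ?_
  have : (γ/γ₀) * (C * Real.exp (-c'*γ)) * (rB K1 g1 n * γ^n *
          (qq K2 g2 j * Real.exp (ra K2 g2 * γ)))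
      = (C/γ₀) * (rB K1 g1 n * qq K2 g2 j * (γ^(n+1) *
          (Real.exp (-c'*γ) * Real.exp (ra K2 g2*γ)))) := by
    rw [pow_succ]
    ring
  rw [this, hce]

/-! ### the main series identity -/

noncomputable def Ifun (Kx gx Ky gy γ₀ : ℝ) (p : ℕ) : ℝ :=
  ∫ γ in Set.Ioi γ₀, γ^p * Real.exp (-(ra Kx gx + ra Ky gy)*γ) * Real.log (γ/γ₀)

noncomputable def Ufun (Kx gx Ky gy γ₀ : ℝ) (k : ℕ) : ℝ :=
  ∑ n ∈ Finset.range (k+1), rBt Kx gx n * rBt Ky gy (k-n) *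
    (ra Kx gx^(n+1) * (((k-n).factorial : ℝ)) *
       (∑ m₁ ∈ Finset.range (k-n+1), ra Ky gy^m₁/(m₁.factorial : ℝ) *
          Ifun Kx gx Ky gy γ₀ (n+m₁))
     + ra Ky gy^(k-n+1) * ((n.factorial : ℝ)) *
       (∑ m₂ ∈ Finset.range (n+1), ra Kx gx^m₂/(m₂.factorial : ℝ) *
          Ifun Kx gx Ky gy γ₀ (k-n+m₂)))

lemma base_meas (c γ₀ : ℝ) (p : ℕ) :
    Measurable (fun γ : ℝ => γ^p * Real.exp (-c*γ) * Real.log (γ/γ₀)) :=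
  ((measurable_id.pow_const p).mul
    (Real.measurable_exp.comp (measurable_id.const_mul _))).mul
    (Real.measurable_log.comp (measurable_id.div_const _))

lemma T1_integrable {Kx gx Ky gy : ℝ} (hKx : 0 ≤ Kx) (hgx : 0 < gx) (hKy : 0 ≤ Ky) (hgy : 0 < gy)
    {γ₀ : ℝ} (hγ₀ : 0 < γ₀) (n j : ℕ) :
    IntegrableOn (T1 Kx gx Ky gy γ₀ n j) (Set.Ioi γ₀) := by
  have hc : 0 < ra Kx gx + ra Ky gy := add_pos (ra_pos hKx hgx) (ra_pos hKy hgy)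
  unfold T1
  refine Integrable.const_mul ?_ _
  refine integrable_finset_sum _ fun m _ => ?_
  exact ((log_int _ hc (n+m) hγ₀).1).const_mul _

lemma T2_integrable {Kx gx Ky gy : ℝ} (hKx : 0 ≤ Kx) (hgx : 0 < gx) (hKy : 0 ≤ Ky) (hgy : 0 < gy)
    {γ₀ : ℝ} (hγ₀ : 0 < γ₀) (n j : ℕ) :
    IntegrableOn (T2 Kx gx Ky gy γ₀ n j) (Set.Ioi γ₀) := by
  have hc : 0 < ra Kx gx + ra Ky gy := add_pos (ra_pos hKx hgx) (ra_pos hKy hgy)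
  unfold T2
  refine Integrable.const_mul ?_ _
  refine integrable_finset_sum _ fun m _ => ?_
  exact ((log_int _ hc (j+m) hγ₀).1).const_mul _

lemma Ffun_integrable {Kx gx Ky gy : ℝ} (hKx : 0 ≤ Kx) (hgx : 0 < gx) (hKy : 0 ≤ Ky)
    (hgy : 0 < gy) {γ₀ : ℝ} (hγ₀ : 0 < γ₀) (k : ℕ) :
    IntegrableOn (Ffun Kx gx Ky gy γ₀ k) (Set.Ioi γ₀) := by
  unfold Ffun
  refine integrable_finset_sum _ fun n _ => ?_
  exact (T1_integrable hKx hgx hKy hgy hγ₀ n (k-n)).add (T2_integrable hKx hgx hKy hgy hγ₀ n (k-n))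

lemma T1_integral {Kx gx Ky gy : ℝ} (hKx : 0 ≤ Kx) (hgx : 0 < gx) (hKy : 0 ≤ Ky) (hgy : 0 < gy)
    {γ₀ : ℝ} (hγ₀ : 0 < γ₀) (n j : ℕ) :
    ∫ γ in Set.Ioi γ₀, T1 Kx gx Ky gy γ₀ n j γ
      = rA Kx gx * rA Ky gy * rBt Kx gx n * rBt Ky gy j * ra Kx gx^(n+1) * (j.factorial : ℝ) *
          ∑ m ∈ Finset.range (j+1), ra Ky gy^m/(m.factorial : ℝ) * Ifun Kx gx Ky gy γ₀ (n+m) := by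
  have hc : 0 < ra Kx gx + ra Ky gy := add_pos (ra_pos hKx hgx) (ra_pos hKy hgy)
  simp only [T1]
  rw [integral_const_mul]
  congr 1
  rw [integral_finset_sum _ (fun m _ => ((log_int _ hc (n+m) hγ₀).1).const_mul _)]
  exact Finset.sum_congr rfl fun m _ => by rw [integral_const_mul]; rfl

lemma T2_integral {Kx gx Ky gy : ℝ} (hKx : 0 ≤ Kx) (hgx : 0 < gx) (hKy : 0 ≤ Ky) (hgy : 0 < gy)
    {γ₀ : ℝ} (hγ₀ : 0 < γ₀) (n j : ℕ) :
    ∫ γ in Set.Ioi γ₀, T2 Kx gx Ky gy γ₀ n j γ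
      = rA Kx gx * rA Ky gy * rBt Kx gx n * rBt Ky gy j * ra Ky gy^(j+1) * (n.factorial : ℝ) *
          ∑ m ∈ Finset.range (n+1), ra Kx gx^m/(m.factorial : ℝ) * Ifun Kx gx Ky gy γ₀ (j+m) := by
  have hc : 0 < ra Kx gx + ra Ky gy := add_pos (ra_pos hKx hgx) (ra_pos hKy hgy)
  simp only [T2]
  rw [integral_const_mul]
  congr 1
  rw [integral_finset_sum _ (fun m _ => ((log_int _ hc (j+m) hγ₀).1).const_mul _)]
  exact Finset.sum_congr rfl fun m _ => by rw [integral_const_mul]; rfl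

lemma Ffun_integral {Kx gx Ky gy : ℝ} (hKx : 0 ≤ Kx) (hgx : 0 < gx) (hKy : 0 ≤ Ky) (hgy : 0 < gy)
    {γ₀ : ℝ} (hγ₀ : 0 < γ₀) (k : ℕ) :
    ∫ γ in Set.Ioi γ₀, Ffun Kx gx Ky gy γ₀ k γ
      = rA Kx gx * rA Ky gy * Ufun Kx gx Ky gy γ₀ k := by
  simp only [Ffun]
  rw [integral_finset_sum (Finset.range (k+1))
    (f := fun n γ => T1 Kx gx Ky gy γ₀ n (k-n) γ + T2 Kx gx Ky gy γ₀ n (k-n) γ) (fun n _ =>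
    (T1_integrable hKx hgx hKy hgy hγ₀ n (k-n)).add (T2_integrable hKx hgx hKy hgy hγ₀ n (k-n)))]
  rw [Ufun, Finset.mul_sum]
  refine Finset.sum_congr rfl fun n _ => ?_
  rw [integral_add (T1_integrable hKx hgx hKy hgy hγ₀ n (k-n))
    (T2_integrable hKx hgx hKy hgy hγ₀ n (k-n)),
    T1_integral hKx hgx hKy hgy hγ₀ n (k-n), T2_integral hKx hgx hKy hgy hγ₀ n (k-n)]
  ring

lemma series_main {Kx gx Ky gy : ℝ} (hKx : 0 ≤ Kx) (hgx : 0 < gx) (hKy : 0 ≤ Ky) (hgy : 0 < gy)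
    {γ₀ : ℝ} (hγ₀ : 0 < γ₀) :
    IntegrableOn (fun γ => Real.log (γ/γ₀) * gf Kx gx Ky gy γ) (Set.Ioi γ₀) ∧
    Summable (Ufun Kx gx Ky gy γ₀) ∧
    ∫ γ in Set.Ioi γ₀, Real.log (γ/γ₀) * gf Kx gx Ky gy γ
      = rA Kx gx * rA Ky gy * ∑' k, Ufun Kx gx Ky gy γ₀ k := by
  have ha1 := ra_pos hKx hgx
  have ha2 := ra_pos hKy hgy
  have hA1 := rA_pos hKx hgx
  have hA2 := rA_pos hKy hgy
  have hCpos : 0 < rA Kx gx * rA Ky gy := mul_pos hA1 hA2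
  have hG : Measurable (fun γ => Real.log (γ/γ₀) * gf Kx gx Ky gy γ) :=
    (Real.measurable_log.comp (measurable_id.div_const γ₀)).mul
      (gf_measurable hKx hgx hKy hgy)
  have hFmeas : ∀ k, Measurable (Ffun Kx gx Ky gy γ₀ k) := by
    intro k
    unfold Ffun T1 T2
    refine Finset.measurable_sum _ fun n _ => Measurable.add ?_ ?_ <;>
      exact (Finset.measurable_sum _ fun m _ => (base_meas _ _ _).const_mul _).const_mul _
  have hnn : ∀ k, ∀ x ∈ Set.Ioi γ₀, 0 ≤ Ffun Kx gx Ky gy γ₀ k x := by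
    intro k x hx
    have hx0 : 0 < x := hγ₀.trans hx
    rw [F_eq_LW hKx hgx hKy hgy γ₀ k x]
    refine mul_nonneg (Real.log_nonneg ((one_le_div hγ₀).mpr (le_of_lt hx))) ?_
    exact Wfun_nonneg hKx hgx hKy hgy k hx0.le
  have hptsum : ∀ x ∈ Set.Ioi γ₀, Summable (fun k => Ffun Kx gx Ky gy γ₀ k x) := by
    intro x hx
    have hx0 : 0 < x := hγ₀.trans hx
    exact (((gf_tsum hKx hgx hKy hgy hx0).1).mul_left (Real.log (x/γ₀))).congr
      fun k => (F_eq_LW hKx hgx hKy hgy γ₀ k x).symm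
  have heq : ∀ x ∈ Set.Ioi γ₀, Real.log (x/γ₀) * gf Kx gx Ky gy x
      = ∑' k, Ffun Kx gx Ky gy γ₀ k x := by
    intro x hx
    have hx0 : 0 < x := hγ₀.trans hx
    rw [(gf_tsum hKx hgx hKy hgy hx0).2, ← tsum_mul_left]
    exact tsum_congr fun k => (F_eq_LW hKx hgx hKy hgy γ₀ k x).symm
  -- the summable bound
  set cb : ℕ → ℝ := fun k => (rA Kx gx * rA Ky gy/γ₀) *
    ((∑ n ∈ Finset.range (k+1), px Kx gx n * qq Ky gy (k-n))
      + (∑ n ∈ Finset.range (k+1), px Ky gy n * qq Kx gx (k-n))) with hcb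
  have habs : ∀ (f : ℕ → ℝ), (∀ n, 0 ≤ f n) → Summable f → Summable (fun n => ‖f n‖) := by
    intro f hf hs
    refine hs.congr fun n => ?_
    rw [Real.norm_eq_abs, abs_of_nonneg (hf n)]
  have hc : Summable cb := by
    refine Summable.mul_left _ (Summable.add ?_ ?_)
    · exact summable_sum_mul_range_of_summable_norm'
        (habs _ (px_nonneg hKx hgx) (summable_px hKx hgx)) (summable_px hKx hgx)
        (habs _ (qq_nonneg hKy hgy) (summable_qq hKy hgy)) (summable_qq hKy hgy)
    · exact summable_sum_mul_range_of_summable_norm'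
        (habs _ (px_nonneg hKy hgy) (summable_px hKy hgy)) (summable_px hKy hgy)
        (habs _ (qq_nonneg hKx hgx) (summable_qq hKx hgx)) (summable_qq hKx hgx)
  have hle : ∀ k, ∫ x in Set.Ioi γ₀, Ffun Kx gx Ky gy γ₀ k x ≤ cb k := by
    intro k
    set Bnd : ℝ → ℝ := fun γ => (rA Kx gx * rA Ky gy/γ₀) *
      ∑ n ∈ Finset.range (k+1),
        (rB Kx gx n * qq Ky gy (k-n) * (γ^(n+1) * Real.exp (-(ra Kx gx)*γ))
          + rB Ky gy n * qq Kx gx (k-n) * (γ^(n+1) * Real.exp (-(ra Ky gy)*γ))) with hBnd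
    have hBint : IntegrableOn Bnd (Set.Ioi γ₀) := by
      refine Integrable.const_mul ?_ _
      refine integrable_finset_sum _ fun n _ => Integrable.add ?_ ?_
      · exact ((exp_tail (ra Kx gx) ha1 (n+1) hγ₀.le).1).const_mul _
      · exact ((exp_tail (ra Ky gy) ha2 (n+1) hγ₀.le).1).const_mul _
    have hpb : ∀ γ ∈ Set.Ioi γ₀, Ffun Kx gx Ky gy γ₀ k γ ≤ Bnd γ := by
      intro γ hγ
      have hγ0 : 0 < γ := hγ₀.trans hγ
      rw [F_eq_LW hKx hgx hKy hgy γ₀ k γ]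
      have hexpand : Real.log (γ/γ₀) * Wfun Kx gx Ky gy k γ
          = ∑ n ∈ Finset.range (k+1),
              (Real.log (γ/γ₀) * (rA Kx gx * rA Ky gy *
                  Real.exp (-(ra Kx gx + ra Ky gy)*γ)) *
                (rB Kx gx n * γ^n * DD Ky gy (k-n) γ)
              + Real.log (γ/γ₀) * (rA Kx gx * rA Ky gy *
                  Real.exp (-(ra Kx gx + ra Ky gy)*γ)) *
                (rB Ky gy n * γ^n * DD Kx gx (k-n) γ)) := by
        rw [Wfun, Finset.mul_sum, Finset.mul_sum]
        refine Finset.sum_congr rfl fun n _ => ?_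
        ring
      rw [hexpand]
      simp only [hBnd]
      rw [Finset.mul_sum]
      refine Finset.sum_le_sum fun n _ => ?_
      rw [mul_add]
      refine add_le_add ?_ ?_
      · refine key_term_le hKx hgx hKy hgy hγ₀ hγ (rA Kx gx * rA Ky gy)
          (ra Kx gx + ra Ky gy) hCpos.le ?_ n (k-n)
        rw [← Real.exp_add]; congr 1; ring
      · refine key_term_le hKy hgy hKx hgx hγ₀ hγ (rA Kx gx * rA Ky gy)
          (ra Kx gx + ra Ky gy) hCpos.le ?_ n (k-n)
        rw [← Real.exp_add]; congr 1; ring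
    have h1 : ∫ x in Set.Ioi γ₀, Ffun Kx gx Ky gy γ₀ k x ≤ ∫ x in Set.Ioi γ₀, Bnd x :=
      setIntegral_mono_on (Ffun_integrable hKx hgx hKy hgy hγ₀ k) hBint measurableSet_Ioi hpb
    refine h1.trans ?_
    have h2 : ∫ x in Set.Ioi γ₀, Bnd x = (rA Kx gx * rA Ky gy/γ₀) *
        ∑ n ∈ Finset.range (k+1),
          (rB Kx gx n * qq Ky gy (k-n) * (∫ x in Set.Ioi γ₀, x^(n+1) * Real.exp (-(ra Kx gx)*x))
            + rB Ky gy n * qq Kx gx (k-n) * (∫ x in Set.Ioi γ₀, x^(n+1) * Real.exp (-(ra Ky gy)*x))) := by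
      simp only [hBnd]
      rw [integral_const_mul]
      congr 1
      rw [integral_finset_sum (Finset.range (k+1)) (f := fun n γ =>
        rB Kx gx n * qq Ky gy (k-n) * (γ^(n+1) * Real.exp (-(ra Kx gx)*γ))
          + rB Ky gy n * qq Kx gx (k-n) * (γ^(n+1) * Real.exp (-(ra Ky gy)*γ)))
        (fun n _ => (((exp_tail (ra Kx gx) ha1 (n+1) hγ₀.le).1).const_mul _).add
          (((exp_tail (ra Ky gy) ha2 (n+1) hγ₀.le).1).const_mul _))]
      refine Finset.sum_congr rfl fun n _ => ?_
      rw [integral_add (((exp_tail (ra Kx gx) ha1 (n+1) hγ₀.le).1).const_mul _)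
        (((exp_tail (ra Ky gy) ha2 (n+1) hγ₀.le).1).const_mul _),
        integral_const_mul, integral_const_mul]
    rw [h2]
    simp only [hcb]
    refine mul_le_mul_of_nonneg_left ?_ (by positivity)
    rw [← Finset.sum_add_distrib]
    refine Finset.sum_le_sum fun n _ => ?_
    refine add_le_add ?_ ?_
    · have ht := exp_tail_le (ra Kx gx) ha1 (n+1) hγ₀.le
      have hq := qq_nonneg hKy hgy (k-n)
      have hrb := rB_nonneg hKx hgx n
      calc rB Kx gx n * qq Ky gy (k-n) * (∫ x in Set.Ioi γ₀, x^(n+1) * Real.exp (-(ra Kx gx)*x))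
          ≤ rB Kx gx n * qq Ky gy (k-n) * (((n+1).factorial : ℝ) / ra Kx gx^(n+1+1)) :=
            mul_le_mul_of_nonneg_left ht (by positivity)
        _ = rB Kx gx n * (((n+1).factorial : ℝ) / ra Kx gx^(n+2)) * qq Ky gy (k-n) := by
            ring
        _ ≤ px Kx gx n * qq Ky gy (k-n) :=
            mul_le_mul_of_nonneg_right (rB_tail_le hKx hgx n) hq
    · have ht := exp_tail_le (ra Ky gy) ha2 (n+1) hγ₀.le
      have hq := qq_nonneg hKx hgx (k-n)
      have hrb := rB_nonneg hKy hgy n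
      calc rB Ky gy n * qq Kx gx (k-n) * (∫ x in Set.Ioi γ₀, x^(n+1) * Real.exp (-(ra Ky gy)*x))
          ≤ rB Ky gy n * qq Kx gx (k-n) * (((n+1).factorial : ℝ) / ra Ky gy^(n+1+1)) :=
            mul_le_mul_of_nonneg_left ht (by positivity)
        _ = rB Ky gy n * (((n+1).factorial : ℝ) / ra Ky gy^(n+2)) * qq Kx gx (k-n) := by
            ring
        _ ≤ px Ky gy n * qq Kx gx (k-n) :=
            mul_le_mul_of_nonneg_right (rB_tail_le hKy hgy n) hq
  obtain ⟨hI, hS, hE⟩ := swap_helper measurableSet_Ioi hG hFmeas hnn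
    (fun k => Ffun_integrable hKx hgx hKy hgy hγ₀ k) hptsum heq hc hle
  have hFi : ∀ k, (∫ x in Set.Ioi γ₀, Ffun Kx gx Ky gy γ₀ k x)
      = rA Kx gx * rA Ky gy * Ufun Kx gx Ky gy γ₀ k :=
    fun k => Ffun_integral hKx hgx hKy hgy hγ₀ k
  refine ⟨hI, ?_, ?_⟩
  · refine ((hS.congr hFi).div_const (rA Kx gx * rA Ky gy)).congr fun k => ?_
    rw [mul_div_cancel_left₀ _ hCpos.ne']
  · rw [hE, tsum_congr hFi, tsum_mul_left]

/-! ### identification of densities -/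

lemma rician_withDensity_Ioi {K g : ℝ} (hK : 0 ≤ K) (hg : 0 < g) (t : ℝ) :
    (volume.withDensity fun u => ENNReal.ofReal (ricianDensity K g u)) (Set.Ioi t)
      = ENNReal.ofReal (Fb K g t) := by
  rw [withDensity_apply _ measurableSet_Ioi]
  exact (ofReal_integral_eq_lintegral_ofReal (rician_integrableOn_Ioi hK hg t)
    ((ae_restrict_iff' measurableSet_Ioi).2
      (Eventually.of_forall fun x _ => rician_nonneg hK hg x))).symm

lemma gf_withDensity_Ioi {Kx gx Ky gy : ℝ} (hKx : 0 ≤ Kx) (hgx : 0 < gx) (hKy : 0 ≤ Ky)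
    (hgy : 0 < gy) {t : ℝ} (ht : 0 < t) :
    (volume.withDensity fun u => ENNReal.ofReal (gf Kx gx Ky gy u)) (Set.Ioi t)
      = ENNReal.ofReal (Fb Kx gx t * Fb Ky gy t) := by
  rw [withDensity_apply _ measurableSet_Ioi,
    ← (gf_tail hKx hgx hKy hgy ht).2]
  exact (ofReal_integral_eq_lintegral_ofReal (gf_tail hKx hgx hKy hgy ht).1
    ((ae_restrict_iff' measurableSet_Ioi).2
      (Eventually.of_forall fun x _ => gf_nonneg hKx hgx hKy hgy x))).symm

theorem stmt_14' {Ω : Type*} [MeasureSpace Ω] [IsProbabilityMeasure (ℙ : Measure Ω)]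
    (Kx gx Ky gy : ℝ) (hKx : 0 ≤ Kx) (hgx : 0 < gx) (hKy : 0 ≤ Ky) (hgy : 0 < gy)
    (X Y : Ω → ℝ) (hXm : Measurable X) (hYm : Measurable Y)
    (hXY : ProbabilityTheory.IndepFun X Y ℙ)
    (hX : Measure.map X ℙ = volume.withDensity fun u => ENNReal.ofReal (ricianDensity Kx gx u))
    (hY : Measure.map Y ℙ = volume.withDensity fun u => ENNReal.ofReal (ricianDensity Ky gy u))
    (fZ : ℝ → ℝ) (hfZmeas : Measurable fZ)
    (hfZ : Measure.map (fun ω => min (X ω) (Y ω)) ℙ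
      = volume.withDensity fun u => ENNReal.ofReal (fZ u))
    (γ₀ : ℝ) (hγ₀ : 0 < γ₀) :
    IntegrableOn (fun γ => Real.log (γ / γ₀) * fZ γ) (Set.Ioi γ₀) ∧
    Summable (Ufun Kx gx Ky gy γ₀) ∧
    (∫ γ in Set.Ioi γ₀, Real.log (γ / γ₀) * fZ γ)
      = rA Kx gx * rA Ky gy * ∑' k, Ufun Kx gx Ky gy γ₀ k := by
  have hmin : Measurable (fun ω => min (X ω) (Y ω)) := hXm.min hYm
  set μ : Measure ℝ := Measure.map (fun ω => min (X ω) (Y ω)) ℙ with hμ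
  haveI : IsProbabilityMeasure μ := Measure.isProbabilityMeasure_map hmin.aemeasurable
  have hμIoi : ∀ t : ℝ, 0 < t → μ (Set.Ioi t)
      = ENNReal.ofReal (Fb Kx gx t * Fb Ky gy t) := by
    intro t ht
    rw [hμ, Measure.map_apply hmin measurableSet_Ioi]
    have hpre : (fun ω => min (X ω) (Y ω)) ⁻¹' (Set.Ioi t)
        = X ⁻¹' (Set.Ioi t) ∩ Y ⁻¹' (Set.Ioi t) := by
      ext ω; simp [lt_min_iff]
    rw [hpre, hXY.measure_inter_preimage_eq_mul (Set.Ioi t) (Set.Ioi t) measurableSet_Ioi measurableSet_Ioi,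
      ← Measure.map_apply hXm measurableSet_Ioi, ← Measure.map_apply hYm measurableSet_Ioi,
      hX, hY, rician_withDensity_Ioi hKx hgx t, rician_withDensity_Ioi hKy hgy t,
      ← ENNReal.ofReal_mul (Fb_nonneg hKx hgx t)]
  set ν : Measure ℝ := volume.withDensity fun u => ENNReal.ofReal (gf Kx gx Ky gy u) with hν
  have hνIoi : ∀ t : ℝ, 0 < t → ν (Set.Ioi t)
      = ENNReal.ofReal (Fb Kx gx t * Fb Ky gy t) := fun t ht =>
    gf_withDensity_Ioi hKx hgx hKy hgy ht
  haveI hfinν : IsFiniteMeasure (ν.restrict (Set.Ioi γ₀)) := by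
    refine ⟨?_⟩
    rw [Measure.restrict_apply_univ, hνIoi γ₀ hγ₀]
    exact ENNReal.ofReal_lt_top
  have hext : μ.restrict (Set.Ioi γ₀) = ν.restrict (Set.Ioi γ₀) := by
    refine Measure.ext_of_Iic _ _ fun a => ?_
    rw [Measure.restrict_apply measurableSet_Iic, Measure.restrict_apply measurableSet_Iic,
      Set.inter_comm, Set.Ioi_inter_Iic]
    rcases le_or_gt a γ₀ with h | h
    · rw [Set.Ioc_eq_empty (not_lt.mpr h)]
      simp
    · have hdiff : Set.Ioc γ₀ a = Set.Ioi γ₀ \ Set.Ioi a := (Set.Ioi_diff_Ioi).symm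
      rw [hdiff,
        measure_diff (Set.Ioi_subset_Ioi h.le) measurableSet_Ioi.nullMeasurableSet
          (measure_ne_top μ _),
        measure_diff (Set.Ioi_subset_Ioi h.le) measurableSet_Ioi.nullMeasurableSet
          (by rw [hνIoi a (hγ₀.trans h)]; exact ENNReal.ofReal_ne_top),
        hμIoi γ₀ hγ₀, hμIoi a (hγ₀.trans h), hνIoi γ₀ hγ₀, hνIoi a (hγ₀.trans h)]
  have hae : (fun u => ENNReal.ofReal (fZ u))
      =ᵐ[volume.restrict (Set.Ioi γ₀)] (fun u => ENNReal.ofReal (gf Kx gx Ky gy u)) := by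
    have h1 : (volume.restrict (Set.Ioi γ₀)).withDensity (fun u => ENNReal.ofReal (fZ u))
        = (volume.restrict (Set.Ioi γ₀)).withDensity
            (fun u => ENNReal.ofReal (gf Kx gx Ky gy u)) := by
      rw [← restrict_withDensity measurableSet_Ioi, ← restrict_withDensity measurableSet_Ioi,
        ← hfZ, ← hν, hext]
    refine (withDensity_eq_iff hfZmeas.ennreal_ofReal.aemeasurable
      ((gf_measurable hKx hgx hKy hgy).ennreal_ofReal.aemeasurable) ?_).mp h1
    have h2 : ∫⁻ u, ENNReal.ofReal (fZ u) ∂(volume.restrict (Set.Ioi γ₀))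
        = ((volume.restrict (Set.Ioi γ₀)).withDensity (fun u => ENNReal.ofReal (fZ u)))
            Set.univ := by
      rw [withDensity_apply _ MeasurableSet.univ, Measure.restrict_univ]
    rw [h2, ← restrict_withDensity measurableSet_Ioi, ← hfZ]
    exact measure_ne_top _ _
  have haefg : ∀ᵐ u ∂(volume.restrict (Set.Ioi γ₀)), fZ u = gf Kx gx Ky gy u := by
    filter_upwards [hae, ae_restrict_mem measurableSet_Ioi] with u h1 h2
    have hg0 : 0 < gf Kx gx Ky gy u := gf_pos hKx hgx hKy hgy (hγ₀.trans h2)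
    have hfZ0 : 0 < fZ u := by
      have : 0 < ENNReal.ofReal (fZ u) := by
        rw [h1]; exact ENNReal.ofReal_pos.mpr hg0
      exact ENNReal.ofReal_pos.mp this
    exact (ENNReal.ofReal_eq_ofReal_iff hfZ0.le hg0.le).mp h1
  obtain ⟨hI, hS, hE⟩ := series_main hKx hgx hKy hgy hγ₀
  have hcongr : ∫ γ in Set.Ioi γ₀, Real.log (γ / γ₀) * fZ γ
      = ∫ γ in Set.Ioi γ₀, Real.log (γ / γ₀) * gf Kx gx Ky gy γ := by
    refine integral_congr_ae ?_
    filter_upwards [haefg] with u hu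
    rw [hu]
  refine ⟨?_, hS, by rw [hcongr, hE]⟩
  refine hI.congr ?_
  filter_upwards [haefg] with u hu
  rw [hu]

/-- the capacity integral `∫_{γ₀}^∞ ln(γ/γ₀) f_Z(γ) dγ` (optimal
simultaneous power and rate adaptation with cutoff `γ₀`) expanded as a converging
double power series. -/
theorem stmt_14 {Ω : Type*} [MeasureSpace Ω] [IsProbabilityMeasure (ℙ : Measure Ω)]
    (Kx gx Ky gy : ℝ) (hKx : 0 ≤ Kx) (hgx : 0 < gx) (hKy : 0 ≤ Ky) (hgy : 0 < gy)
    (X Y : Ω → ℝ) (hXm : Measurable X) (hYm : Measurable Y)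
    (hXY : ProbabilityTheory.IndepFun X Y ℙ)
    (hX : Measure.map X ℙ = volume.withDensity fun u => ENNReal.ofReal (ricianDensity Kx gx u))
    (hY : Measure.map Y ℙ = volume.withDensity fun u => ENNReal.ofReal (ricianDensity Ky gy u))
    (fZ : ℝ → ℝ) (hfZmeas : Measurable fZ)
    (hfZ : Measure.map (fun ω => min (X ω) (Y ω)) ℙ
      = volume.withDensity fun u => ENNReal.ofReal (fZ u))
    (γ₀ : ℝ) (hγ₀ : 0 < γ₀) :
    IntegrableOn (fun γ => Real.log (γ / γ₀) * fZ γ) (Set.Ioi γ₀) ∧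
    Summable (fun k : ℕ => ∑ n ∈ Finset.range (k + 1),
      rBt Kx gx n * rBt Ky gy (k - n) *
        (ra Kx gx ^ (n + 1) * (((k - n).factorial : ℝ)) *
            (∑ m₁ ∈ Finset.range (k - n + 1),
              ra Ky gy ^ m₁ / (m₁.factorial : ℝ) *
                ∫ γ in Set.Ioi γ₀,
                  γ ^ (n + m₁) * Real.exp (-(ra Kx gx + ra Ky gy) * γ) *
                    Real.log (γ / γ₀)) +
          ra Ky gy ^ (k - n + 1) * ((n.factorial : ℝ)) *
            (∑ m₂ ∈ Finset.range (n + 1),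
              ra Kx gx ^ m₂ / (m₂.factorial : ℝ) *
                ∫ γ in Set.Ioi γ₀,
                  γ ^ (k - n + m₂) * Real.exp (-(ra Kx gx + ra Ky gy) * γ) *
                    Real.log (γ / γ₀)))) ∧
    (∫ γ in Set.Ioi γ₀, Real.log (γ / γ₀) * fZ γ)
      = rA Kx gx * rA Ky gy * ∑' k : ℕ, ∑ n ∈ Finset.range (k + 1),
          rBt Kx gx n * rBt Ky gy (k - n) *
            (ra Kx gx ^ (n + 1) * (((k - n).factorial : ℝ)) *
                (∑ m₁ ∈ Finset.range (k - n + 1),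
                  ra Ky gy ^ m₁ / (m₁.factorial : ℝ) *
                    ∫ γ in Set.Ioi γ₀,
                      γ ^ (n + m₁) * Real.exp (-(ra Kx gx + ra Ky gy) * γ) *
                        Real.log (γ / γ₀)) +
              ra Ky gy ^ (k - n + 1) * ((n.factorial : ℝ)) *
                (∑ m₂ ∈ Finset.range (n + 1),
                  ra Kx gx ^ m₂ / (m₂.factorial : ℝ) *
                    ∫ γ in Set.Ioi γ₀,
                      γ ^ (k - n + m₂) * Real.exp (-(ra Kx gx + ra Ky gy) * γ) *
                        Real.log (γ / γ₀))) := by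
  obtain ⟨h1, h2, h3⟩ := stmt_14' Kx gx Ky gy hKx hgx hKy hgy X Y hXm hYm hXY hX hY
    fZ hfZmeas hfZ γ₀ hγ₀
  exact ⟨h1, h2, h3⟩
end
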